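/- arXiv:2509.09838 — 9 statements merged into one kernel-verified Lean document; each statement's English description precedes it below -/
import Mathlib

section
/- For any γ ∈ (0,1) and any integer k ≥ 1, the sum ∑_{i=1}^{k} γ^{k−i} / √(i+1) is at most √(2/k) · 1/(1−γ) + γ^{k/2}/(1−γ). -/
open Finset

lemma sum_geom_shift (γ : ℝ) (a k : ℕ) (ha : a ≤ k) :
    ∑ i ∈ Finset.Ioc a k, γ ^ (k - i) = ∑ j ∈ Finset.range (k - a), γ ^ j := by
  apply Finset.sum_nbij' (fun i => k - i) (fun j => k - j) <;>
    intros <;> simp_all [Finset.mem_Ioc, Finset.mem_range] <;> omega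

/-- Bound on the discounted sum of inverse square roots. -/
theorem sum_geom_inv_sqrt_bound (γ : ℝ) (hγ0 : 0 < γ) (hγ1 : γ < 1)
    (k : ℕ) (hk : 1 ≤ k) :
    ∑ i ∈ Finset.Icc 1 k, γ ^ (k - i) / Real.sqrt ((i : ℝ) + 1) ≤
      Real.sqrt (2 / (k : ℝ)) * (1 / (1 - γ)) + γ ^ ((k : ℝ) / 2) / (1 - γ) := by
  have h1γ : 0 < 1 - γ := by linarith
  set m := k / 2 with hm
  have hmk : m ≤ k := Nat.div_le_self k 2
  have hkpos : (0:ℝ) < k := by exact_mod_cast hk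
  -- geometric sum bound
  have geom : ∀ n : ℕ, ∑ j ∈ range n, γ ^ j ≤ 1 / (1 - γ) := by
    intro n
    rw [geom_sum_eq (ne_of_lt hγ1) n]
    rw [show (γ ^ n - 1) / (γ - 1) = (1 - γ ^ n) / (1 - γ) by
      rw [← neg_div_neg_eq]; ring_nf]
    gcongr
    nlinarith [pow_nonneg hγ0.le n]
  -- split
  have split : ∑ i ∈ Icc 1 k, γ ^ (k - i) / Real.sqrt ((i:ℝ)+1)
      = ∑ i ∈ Ioc 0 m, γ ^ (k - i) / Real.sqrt ((i:ℝ)+1)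
      + ∑ i ∈ Ioc m k, γ ^ (k - i) / Real.sqrt ((i:ℝ)+1) := by
    rw [← Finset.Icc_add_one_left_eq_Ioc]
    exact (Finset.sum_Ioc_consecutive _ (Nat.zero_le m) hmk).symm
  -- piece 1
  have p1 : ∑ i ∈ Ioc 0 m, γ ^ (k - i) / Real.sqrt ((i:ℝ)+1) ≤ γ ^ ((k:ℝ)/2) / (1 - γ) := by
    have step1 : ∑ i ∈ Ioc 0 m, γ ^ (k - i) / Real.sqrt ((i:ℝ)+1)
        ≤ ∑ i ∈ Ioc 0 m, γ ^ (k - m) * γ ^ (m - i) := by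
      apply Finset.sum_le_sum
      intro i hi
      simp only [mem_Ioc] at hi
      rw [← pow_add, show k - m + (m - i) = k - i by omega]
      apply div_le_self (pow_nonneg hγ0.le _)
      rw [Real.one_le_sqrt]
      have : (1:ℝ) ≤ (i:ℝ) := by exact_mod_cast hi.1
      linarith
    rw [← Finset.mul_sum] at step1
    have step2 : ∑ i ∈ Ioc 0 m, γ ^ (m - i) ≤ 1 / (1 - γ) := by
      rw [sum_geom_shift γ 0 m (Nat.zero_le m)]
      exact geom _
    have step3 : γ ^ (k - m) ≤ γ ^ ((k:ℝ)/2) := by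
      rw [← Real.rpow_natCast γ (k - m)]
      apply Real.rpow_le_rpow_of_exponent_ge hγ0 hγ1.le
      have h2 : (m * 2 : ℕ) ≤ k := Nat.div_mul_le_self k 2
      have h2' : ((m:ℝ)) * 2 ≤ k := by exact_mod_cast h2
      rw [Nat.cast_sub hmk]
      linarith
    calc ∑ i ∈ Ioc 0 m, γ ^ (k - i) / Real.sqrt ((i:ℝ)+1)
        ≤ γ ^ (k - m) * ∑ i ∈ Ioc 0 m, γ ^ (m - i) := step1
      _ ≤ γ ^ ((k:ℝ)/2) * (1 / (1 - γ)) := by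
          apply mul_le_mul step3 step2 (Finset.sum_nonneg fun i _ => pow_nonneg hγ0.le _)
            (Real.rpow_nonneg hγ0.le _)
      _ = γ ^ ((k:ℝ)/2) / (1 - γ) := by ring
  -- piece 2
  have p2 : ∑ i ∈ Ioc m k, γ ^ (k - i) / Real.sqrt ((i:ℝ)+1)
      ≤ Real.sqrt (2 / (k:ℝ)) * (1 / (1 - γ)) := by
    have step1 : ∑ i ∈ Ioc m k, γ ^ (k - i) / Real.sqrt ((i:ℝ)+1)
        ≤ ∑ i ∈ Ioc m k, Real.sqrt (2 / (k:ℝ)) * γ ^ (k - i) := by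
      apply Finset.sum_le_sum
      intro i hi
      simp only [mem_Ioc] at hi
      have hipos : (0:ℝ) < (i:ℝ) + 1 := by positivity
      rw [div_le_iff₀ (Real.sqrt_pos.mpr hipos)]
      rw [mul_assoc, mul_comm (γ ^ (k - i)), ← mul_assoc]
      apply le_mul_of_one_le_left (pow_nonneg hγ0.le _)
      rw [← Real.sqrt_mul (by positivity) _, Real.one_le_sqrt]
      rw [div_mul_eq_mul_div, le_div_iff₀ hkpos, one_mul]
      have hki : k ≤ 2 * (i + 1) := by omega
      have : (k:ℝ) ≤ 2 * ((i:ℝ) + 1) := by exact_mod_cast hki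
      linarith
    rw [← Finset.mul_sum] at step1
    have step2 : ∑ i ∈ Ioc m k, γ ^ (k - i) ≤ 1 / (1 - γ) := by
      rw [sum_geom_shift γ m k hmk]
      exact geom _
    calc ∑ i ∈ Ioc m k, γ ^ (k - i) / Real.sqrt ((i:ℝ)+1)
        ≤ Real.sqrt (2 / (k:ℝ)) * ∑ i ∈ Ioc m k, γ ^ (k - i) := step1
      _ ≤ Real.sqrt (2 / (k:ℝ)) * (1 / (1 - γ)) := by
          apply mul_le_mul_of_nonneg_left step2 (Real.sqrt_nonneg _)
  rw [split]
  linarith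
end

section
/- For any γ ∈ (0,1) and any integer k with k ≥ 1/(ln(1/γ))², the sum ∑_{i=1}^{k} γ^{k−i} / √(i+1) is at most (1/√k) · 4/(1−γ). -/
private lemma geom_aux (γ : ℝ) (hγ0 : 0 < γ) (hγ1 : γ < 1) (n : ℕ) :
    ∑ j ∈ Finset.range n, γ ^ j ≤ 1 / (1 - γ) := by
  have h1 : 0 < 1 - γ := by linarith
  rw [geom_sum_eq (by linarith : γ ≠ 1), show (γ ^ n - 1) / (γ - 1) = (1 - γ ^ n) / (1 - γ) by
    rw [div_eq_div_iff (by linarith) (by linarith)]; ring]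
  have h2 : 0 ≤ γ ^ n := le_of_lt (pow_pos hγ0 n)
  rw [div_le_div_iff₀ h1 h1]
  nlinarith

private lemma sum_reindex (γ : ℝ) (a b : ℕ) (hab : a ≤ b) :
    ∑ i ∈ Finset.Ioc a b, γ ^ (b - i) = ∑ j ∈ Finset.range (b - a), γ ^ j := by
  apply Finset.sum_nbij' (fun i => b - i) (fun j => b - j)
  · intro i hi
    simp only [Finset.mem_Ioc] at hi
    simp only [Finset.mem_range]
    omega
  · intro j hj
    simp only [Finset.mem_range] at hj
    simp only [Finset.mem_Ioc]
    omega
  · intro i hi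
    simp only [Finset.mem_Ioc] at hi
    omega
  · intro j hj
    simp only [Finset.mem_range] at hj
    omega
  · intro i hi
    rfl

/-- Bound on the discounted sum of inverse square roots for large `k`. -/
theorem sum_geom_inv_sqrt_bound_large_k (γ : ℝ) (hγ0 : 0 < γ) (hγ1 : γ < 1)
    (k : ℕ) (hk : 1 ≤ k)
    (hklarge : 1 / (Real.log (1 / γ)) ^ 2 ≤ (k : ℝ)) :
    ∑ i ∈ Finset.Icc 1 k, γ ^ (k - i) / Real.sqrt ((i : ℝ) + 1) ≤
      (1 / Real.sqrt (k : ℝ)) * (4 / (1 - γ)) := by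
  have h1γ : 0 < 1 - γ := by linarith
  have hk0 : (0 : ℝ) < k := by exact_mod_cast hk
  have hsk : 0 < Real.sqrt k := Real.sqrt_pos.mpr hk0
  have hL : 0 < Real.log (1 / γ) := by
    apply Real.log_pos
    rw [lt_div_iff₀ hγ0]; linarith
  -- key inequality: log(1/γ) ≥ 1/√k
  have hLk : 1 / Real.sqrt k ≤ Real.log (1 / γ) := by
    have h1 : 1 ≤ (k : ℝ) * (Real.log (1 / γ)) ^ 2 := by
      rw [div_le_iff₀ (by positivity)] at hklarge; linarith
    rw [div_le_iff₀ hsk]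
    nlinarith [Real.sq_sqrt hk0.le, Real.sqrt_nonneg (k : ℝ),
      sq_nonneg (Real.sqrt k * Real.log (1/γ) - 1), mul_pos hsk hL]
  set m := k / 2 with hm
  -- γ ^ (k - m) ≤ 1 / √k
  have hkey : γ ^ (k - m) ≤ 1 / Real.sqrt k := by
    have h1 : γ ^ (k - m) = Real.exp (((k - m : ℕ) : ℝ) * Real.log γ) := by
      rw [← Real.rpow_natCast γ (k - m), Real.rpow_def_of_pos hγ0, mul_comm]
    have hlogneg : Real.log γ = -Real.log (1 / γ) := by
      rw [Real.log_div one_ne_zero (ne_of_gt hγ0), Real.log_one]; ring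
    have hkm : (k : ℝ) / 2 ≤ ((k - m : ℕ) : ℝ) := by
      have : 2 * (k - m) ≥ k := by omega
      have := (Nat.cast_le (α := ℝ)).mpr this
      push_cast at this ⊢
      linarith
    have h2 : ((k - m : ℕ) : ℝ) * Real.log γ ≤ -(Real.sqrt k / 2) := by
      rw [hlogneg]
      have h3 : Real.sqrt k / 2 ≤ ((k - m : ℕ) : ℝ) * Real.log (1 / γ) := by
        have h4 : (k : ℝ) / 2 * (1 / Real.sqrt k) ≤ ((k - m : ℕ) : ℝ) * Real.log (1 / γ) := by
          apply mul_le_mul hkm hLk (by positivity) (by positivity)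
        have h5 : (k : ℝ) / 2 * (1 / Real.sqrt k) = Real.sqrt k / 2 := by
          have hss := Real.mul_self_sqrt hk0.le
          field_simp
          nlinarith [hss]
        linarith
      linarith
    have h6 : Real.exp (-(Real.sqrt k / 2)) ≤ 1 / Real.sqrt k := by
      rw [Real.exp_neg, inv_eq_one_div, div_le_div_iff₀ (Real.exp_pos _) hsk, one_mul]
      -- need √k ≤ exp(√k/2)
      have h7 : (Real.sqrt k / 4 + 1) ^ 2 ≤ Real.exp (Real.sqrt k / 2) := by
        have := Real.add_one_le_exp (Real.sqrt k / 4)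
        have h8 : Real.exp (Real.sqrt k / 2) = Real.exp (Real.sqrt k / 4) ^ 2 := by
          rw [← Real.exp_nat_mul]; congr 1; push_cast; ring
        rw [h8]
        have : 0 ≤ Real.sqrt k / 4 + 1 := by positivity
        nlinarith
      nlinarith [sq_nonneg (Real.sqrt k / 4 - 1)]
    calc γ ^ (k - m) = Real.exp (((k - m : ℕ) : ℝ) * Real.log γ) := h1
      _ ≤ Real.exp (-(Real.sqrt k / 2)) := Real.exp_le_exp.mpr h2
      _ ≤ 1 / Real.sqrt k := h6
  -- split the sum
  have hsplit : ∑ i ∈ Finset.Icc 1 k, γ ^ (k - i) / Real.sqrt ((i : ℝ) + 1)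
      = (∑ i ∈ Finset.Ioc 0 m, γ ^ (k - i) / Real.sqrt ((i : ℝ) + 1))
        + ∑ i ∈ Finset.Ioc m k, γ ^ (k - i) / Real.sqrt ((i : ℝ) + 1) := by
    rw [show Finset.Icc 1 k = Finset.Ioc 0 k from Finset.Icc_add_one_left_eq_Ioc 0 k]
    rw [← Finset.sum_Ioc_consecutive _ (Nat.zero_le m) (Nat.div_le_self k 2)]
  rw [hsplit]
  -- Part A
  have hA : ∑ i ∈ Finset.Ioc 0 m, γ ^ (k - i) / Real.sqrt ((i : ℝ) + 1)
      ≤ (1 / Real.sqrt k) * (1 / (1 - γ)) := by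
    have step : ∀ i ∈ Finset.Ioc 0 m, γ ^ (k - i) / Real.sqrt ((i : ℝ) + 1)
        ≤ (1 / Real.sqrt k) * γ ^ (m - i) := by
      intro i hi
      simp only [Finset.mem_Ioc] at hi
      have hsqrt1 : 1 ≤ Real.sqrt ((i : ℝ) + 1) := by
        have h := Real.sqrt_le_sqrt (show (1:ℝ) ≤ (i:ℝ)+1 by
          have : (0:ℝ) ≤ (i:ℝ) := Nat.cast_nonneg i
          linarith)
        rwa [Real.sqrt_one] at h
      have hpow : γ ^ (k - i) = γ ^ (k - m) * γ ^ (m - i) := by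
        rw [← pow_add]; congr 1; omega
      have hγpow : (0:ℝ) ≤ γ ^ (m - i) := le_of_lt (pow_pos hγ0 _)
      calc γ ^ (k - i) / Real.sqrt ((i : ℝ) + 1) ≤ γ ^ (k - i) / 1 := by
            apply div_le_div_of_nonneg_left (le_of_lt (pow_pos hγ0 _)) one_pos hsqrt1
        _ = γ ^ (k - m) * γ ^ (m - i) := by rw [div_one, hpow]
        _ ≤ (1 / Real.sqrt k) * γ ^ (m - i) := by
            apply mul_le_mul_of_nonneg_right hkey hγpow
    calc ∑ i ∈ Finset.Ioc 0 m, γ ^ (k - i) / Real.sqrt ((i : ℝ) + 1)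
        ≤ ∑ i ∈ Finset.Ioc 0 m, (1 / Real.sqrt k) * γ ^ (m - i) :=
          Finset.sum_le_sum step
      _ = (1 / Real.sqrt k) * ∑ i ∈ Finset.Ioc 0 m, γ ^ (m - i) := by
          rw [Finset.mul_sum]
      _ ≤ (1 / Real.sqrt k) * (1 / (1 - γ)) := by
          apply mul_le_mul_of_nonneg_left _ (by positivity)
          rw [sum_reindex γ 0 m (Nat.zero_le m)]
          exact geom_aux γ hγ0 hγ1 _
  -- Part B
  have hB : ∑ i ∈ Finset.Ioc m k, γ ^ (k - i) / Real.sqrt ((i : ℝ) + 1)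
      ≤ (Real.sqrt 2 / Real.sqrt k) * (1 / (1 - γ)) := by
    have step : ∀ i ∈ Finset.Ioc m k, γ ^ (k - i) / Real.sqrt ((i : ℝ) + 1)
        ≤ (Real.sqrt 2 / Real.sqrt k) * γ ^ (k - i) := by
      intro i hi
      simp only [Finset.mem_Ioc] at hi
      have hik : (k : ℝ) / 2 ≤ (i : ℝ) + 1 := by
        have : k ≤ 2 * (i + 1) := by omega
        have := (Nat.cast_le (α := ℝ)).mpr this
        push_cast at this
        linarith
      have hs2 : Real.sqrt ((k:ℝ)/2) ≤ Real.sqrt ((i : ℝ) + 1) := Real.sqrt_le_sqrt hik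
      have hsk2 : 0 < Real.sqrt ((k:ℝ)/2) := Real.sqrt_pos.mpr (by linarith)
      have hval : Real.sqrt ((k:ℝ)/2) = Real.sqrt k / Real.sqrt 2 := Real.sqrt_div hk0.le 2
      have hinv : 1 / Real.sqrt ((i : ℝ) + 1) ≤ Real.sqrt 2 / Real.sqrt k := by
        rw [div_le_div_iff₀ (by positivity) hsk, one_mul]
        calc Real.sqrt k = Real.sqrt ((k:ℝ)/2) * Real.sqrt 2 := by
              rw [hval]; field_simp
          _ ≤ Real.sqrt ((i:ℝ)+1) * Real.sqrt 2 := by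
              apply mul_le_mul_of_nonneg_right hs2 (Real.sqrt_nonneg 2)
          _ = Real.sqrt 2 * Real.sqrt ((i:ℝ)+1) := by ring
      have hγpow : (0:ℝ) ≤ γ ^ (k - i) := le_of_lt (pow_pos hγ0 _)
      calc γ ^ (k - i) / Real.sqrt ((i : ℝ) + 1)
          = γ ^ (k - i) * (1 / Real.sqrt ((i : ℝ) + 1)) := by ring
        _ ≤ γ ^ (k - i) * (Real.sqrt 2 / Real.sqrt k) :=
            mul_le_mul_of_nonneg_left hinv hγpow
        _ = (Real.sqrt 2 / Real.sqrt k) * γ ^ (k - i) := by ring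
    calc ∑ i ∈ Finset.Ioc m k, γ ^ (k - i) / Real.sqrt ((i : ℝ) + 1)
        ≤ ∑ i ∈ Finset.Ioc m k, (Real.sqrt 2 / Real.sqrt k) * γ ^ (k - i) :=
          Finset.sum_le_sum step
      _ = (Real.sqrt 2 / Real.sqrt k) * ∑ i ∈ Finset.Ioc m k, γ ^ (k - i) := by
          rw [Finset.mul_sum]
      _ ≤ (Real.sqrt 2 / Real.sqrt k) * (1 / (1 - γ)) := by
          apply mul_le_mul_of_nonneg_left _ (by positivity)
          rw [sum_reindex γ m k (Nat.div_le_self k 2)]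
          exact geom_aux γ hγ0 hγ1 _
  have hs2le : Real.sqrt 2 ≤ 2 := by
    nlinarith [Real.sq_sqrt (by norm_num : (0:ℝ) ≤ 2), Real.sqrt_nonneg 2,
      sq_nonneg (Real.sqrt 2 - 2)]
  have hne1 : Real.sqrt (k:ℝ) ≠ 0 := ne_of_gt hsk
  have hne2 : (1 - γ) ≠ 0 := ne_of_gt h1γ
  have key4 : (1 + Real.sqrt 2) * (1 / (Real.sqrt k * (1 - γ)))
      ≤ 4 * (1 / (Real.sqrt k * (1 - γ))) := by
    apply mul_le_mul_of_nonneg_right _ (by positivity)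
    nlinarith [hs2le, Real.sqrt_nonneg 2]
  have e1 : (1 / Real.sqrt k) * (1 / (1 - γ)) + (Real.sqrt 2 / Real.sqrt k) * (1 / (1 - γ))
      = (1 + Real.sqrt 2) * (1 / (Real.sqrt k * (1 - γ))) := by
    field_simp
    try ring
  have e2 : (1 / Real.sqrt (k:ℝ)) * (4 / (1 - γ)) = 4 * (1 / (Real.sqrt k * (1 - γ))) := by
    field_simp
  linarith
end

section
/- For any x in (0,1), the binary entropy function h(x) = −x ln x − (1−x) ln(1−x) satisfies h(x) ≤ 2√(x(1−x)). -/
lemma neg_mul_log_le (t : ℝ) (ht0 : 0 < t) (ht1 : t < 1) :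
    -t * Real.log t ≤ Real.sqrt (t * (1 - t)) := by
  set s := Real.sqrt t with hs
  have hs0 : 0 < s := Real.sqrt_pos.mpr ht0
  have hss : s * s = t := Real.mul_self_sqrt ht0.le
  have hs1 : s < 1 := by
    rw [hs, show (1:ℝ) = Real.sqrt 1 by simp]
    exact Real.sqrt_lt_sqrt ht0.le ht1
  have hinv : 1 < s⁻¹ := (one_lt_inv₀ hs0).mpr hs1
  have hlogpos : 0 < Real.log s⁻¹ := Real.log_pos hinv
  have hsinh : Real.log s⁻¹ ≤ Real.sinh (Real.log s⁻¹) := (Real.self_lt_sinh_iff.mpr hlogpos).le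
  rw [Real.sinh_log (by positivity)] at hsinh
  have hloginv : Real.log s⁻¹ = -Real.log s := Real.log_inv s
  have hlogt : Real.log t = 2 * Real.log s := by
    rw [← hss, Real.log_mul hs0.ne' hs0.ne']; ring
  have hkey : -Real.log t ≤ (1 - t) / s := by
    have hiv : (s⁻¹)⁻¹ = s := inv_inv s
    rw [hloginv] at hsinh
    have : s⁻¹ = 1 / s := (one_div s).symm
    rw [hlogt]
    have h2 : -Real.log s ≤ (s⁻¹ - s) / 2 := by simpa [hiv] using hsinh
    have : (s⁻¹ - s) = (1 - t)/s := by
      field_simp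
      nlinarith [hss]
    linarith [h2, this ▸ h2]
  have h1 : -t * Real.log t ≤ s * (1 - t) := by
    have := mul_le_mul_of_nonneg_left hkey ht0.le
    calc -t * Real.log t = t * (-Real.log t) := by ring
      _ ≤ t * ((1 - t) / s) := this
      _ = s * (1 - t) := by field_simp; nlinarith [hss]
  calc -t * Real.log t ≤ s * (1 - t) := h1
    _ = Real.sqrt (t * (1 - t) ^ 2) := by
        rw [Real.sqrt_mul ht0.le, Real.sqrt_sq (by linarith), hs]
    _ ≤ Real.sqrt (t * (1 - t)) := by
        apply Real.sqrt_le_sqrt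
        nlinarith [mul_pos (mul_pos ht0 (show (0:ℝ) < 1 - t by linarith)) ht0]

/-- The binary entropy function is at most `2 √(x(1-x))`. -/
theorem binary_entropy_le (x : ℝ) (hx0 : 0 < x) (hx1 : x < 1) :
    -x * Real.log x - (1 - x) * Real.log (1 - x) ≤ 2 * Real.sqrt (x * (1 - x)) := by
  have h1 := neg_mul_log_le x hx0 hx1
  have h2 := neg_mul_log_le (1 - x) (by linarith) (by linarith)
  rw [show 1 - (1 - x) = x by ring, show (1 - x) * x = x * (1 - x) by ring] at h2
  linarith
end

section
/- Let π₁ and π₂ be probability distributions on a finite action set of size A, with π₂ the minimizer over the simplex of π ↦ KL(π ‖ π₁) − τₜ H(π) for some τₜ ≥ 0. Then ‖π₂ − π₁‖₁ ≤ √(2 τₜ ln A). -/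
open Real Set

noncomputable def spm_g (t : ℝ) : ℝ := Real.log t - 3/2 * ((t-1)*(t+5)/(t+2)^2)
noncomputable def spm_phi (t : ℝ) : ℝ := t * Real.log t - t + 1 - 3*(t-1)^2/(2*(t+2))

lemma spm_g_deriv {t : ℝ} (ht : 0 < t) : HasDerivAt spm_g (1/t - 27/(t+2)^3) t := by
  have h2 : t + 2 ≠ 0 := by positivity
  have h1 : HasDerivAt (fun t : ℝ => (t-1)*(t+5)/(t+2)^2)
      (((1*(t+5) + (t-1)*1) * (t+2)^2 - (t-1)*(t+5) * (2*(t+2)^1*1)) / ((t+2)^2)^2) t := by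
    exact (((hasDerivAt_id t).sub_const 1).mul ((hasDerivAt_id t).add_const 5)).div
      (((hasDerivAt_id t).add_const 2).pow 2) (by positivity)
  have h0 : HasDerivAt spm_g (1/t - 3/2 * (((1*(t+5) + (t-1)*1) * (t+2)^2 - (t-1)*(t+5) * (2*(t+2)^1*1)) / ((t+2)^2)^2)) t := by
    simpa [one_div] using (show HasDerivAt spm_g _ t from (Real.hasDerivAt_log ht.ne').sub (h1.const_mul (3/2 : ℝ)))
  convert h0 using 1
  field_simp
  ring

lemma spm_phi_deriv {t : ℝ} (ht : 0 < t) : HasDerivAt spm_phi (spm_g t) t := by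
  have h2 : (2:ℝ)*(t + 2) ≠ 0 := by positivity
  have h1 : HasDerivAt (fun t : ℝ => 3*(t-1)^2/(2*(t+2)))
      (((3*(2*(t-1)^1*1)) * (2*(t+2)) - 3*(t-1)^2 * (2*1)) / (2*(t+2))^2) t := by
    exact ((((hasDerivAt_id t).sub_const 1).pow 2).const_mul 3).div
      (((hasDerivAt_id t).add_const 2).const_mul 2) h2
  have h0 : HasDerivAt spm_phi ((Real.log t + 1) - 1 - (((3*(2*(t-1)^1*1)) * (2*(t+2)) - 3*(t-1)^2 * (2*1)) / (2*(t+2))^2)) t := by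
    exact ((((Real.hasDerivAt_mul_log ht.ne').sub (hasDerivAt_id t)).add_const 1).sub h1)
  convert h0 using 1
  unfold spm_g
  field_simp
  ring

lemma spm_g_mono : MonotoneOn spm_g (Ioi (0:ℝ)) := by
  apply monotoneOn_of_deriv_nonneg (convex_Ioi 0)
  · exact fun x hx => ((spm_g_deriv hx).continuousAt.continuousWithinAt)
  · intro x hx
    rw [interior_Ioi] at hx
    exact ((spm_g_deriv hx).differentiableAt).differentiableWithinAt
  · intro x hx
    rw [interior_Ioi] at hx
    have hx' : (0:ℝ) < x := hx
    have h2 : (0:ℝ) < x + 2 := by linarith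
    rw [(spm_g_deriv hx').deriv]
    rw [div_sub_div _ _ hx'.ne' (pow_pos h2 3).ne']
    apply div_nonneg _ (mul_pos hx' (pow_pos h2 3)).le
    nlinarith [mul_nonneg (sq_nonneg (x-1)) (by linarith : (0:ℝ) ≤ x + 8)]

lemma spm_phi_nonneg {t : ℝ} (ht : 0 ≤ t) : 0 ≤ spm_phi t := by
  rcases eq_or_lt_of_le ht with h | h
  · simp [spm_phi, ← h]; norm_num
  have hg1 : spm_g 1 = 0 := by simp [spm_g]
  have hphi1 : spm_phi 1 = 0 := by simp [spm_phi]
  rcases le_or_gt t 1 with h1 | h1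
  · -- antitone on Ioc 0 1
    have : AntitoneOn spm_phi (Ioc (0:ℝ) 1) := by
      apply antitoneOn_of_deriv_nonpos (convex_Ioc 0 1)
      · exact fun x hx => ((spm_phi_deriv hx.1).continuousAt.continuousWithinAt)
      · intro x hx
        rw [interior_Ioc] at hx
        exact ((spm_phi_deriv hx.1).differentiableAt).differentiableWithinAt
      · intro x hx
        rw [interior_Ioc] at hx
        rw [(spm_phi_deriv hx.1).deriv, ← hg1]
        exact spm_g_mono hx.1 (by norm_num) hx.2.le
    have := this ⟨h, h1⟩ ⟨one_pos, le_refl 1⟩ h1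
    rw [hphi1] at this; exact this
  · have : MonotoneOn spm_phi (Ici (1:ℝ)) := by
      apply monotoneOn_of_deriv_nonneg (convex_Ici 1)
      · exact fun x hx => ((spm_phi_deriv (lt_of_lt_of_le one_pos hx)).continuousAt.continuousWithinAt)
      · intro x hx
        rw [interior_Ici] at hx
        exact ((spm_phi_deriv (lt_trans one_pos hx)).differentiableAt).differentiableWithinAt
      · intro x hx
        rw [interior_Ici] at hx
        rw [(spm_phi_deriv (lt_trans one_pos hx)).deriv, ← hg1]
        exact spm_g_mono (by norm_num) (Set.mem_Ioi.2 (lt_trans one_pos hx)) hx.le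
    have := this (self_mem_Ici) (le_of_lt h1 : (1:ℝ) ≤ t) h1.le
    rw [hphi1] at this; exact this

-- spm_pointwise bound
lemma spm_pointwise (p q : ℝ) (hp : 0 ≤ p) (hq : 0 < q) :
    3*(p-q)^2/(2*(p+2*q)) ≤ p * Real.log (p/q) - p + q := by
  have h := spm_phi_nonneg (t := p/q) (by positivity)
  unfold spm_phi at h
  have h2 : 0 < p + 2*q := by positivity
  have hkey : q * (p/q * Real.log (p/q) - p/q + 1 - 3*(p/q-1)^2/(2*(p/q+2))) =
      p * Real.log (p/q) - p + q - 3*(p-q)^2/(2*(p+2*q)) := by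
    field_simp
  nlinarith [mul_nonneg hq.le h]


/-- Movement bound for the entropy-regularized KL projection:
`‖π₂ - π₁‖₁ ≤ √(2 τₜ ln A)`. -/
theorem soft_proximal_movement (A : ℕ) (hA : 0 < A)
    (π₁ : Fin A → ℝ) (hπ₁0 : ∀ a, 0 < π₁ a) (hπ₁1 : ∑ a, π₁ a = 1)
    (π₂ : Fin A → ℝ) (hπ₂0 : ∀ a, 0 ≤ π₂ a) (hπ₂1 : ∑ a, π₂ a = 1)
    (τ : ℝ) (hτ : 0 ≤ τ)
    (hmin : ∀ q : Fin A → ℝ, (∀ a, 0 ≤ q a) → ∑ a, q a = 1 →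
      (∑ a, π₂ a * Real.log (π₂ a / π₁ a)) - τ * (-∑ a, π₂ a * Real.log (π₂ a)) ≤
        (∑ a, q a * Real.log (q a / π₁ a)) - τ * (-∑ a, q a * Real.log (q a))) :
    ∑ a, |π₂ a - π₁ a| ≤ Real.sqrt (2 * τ * Real.log A) := by
  classical
  set KL := ∑ a, π₂ a * Real.log (π₂ a / π₁ a) with hKL
  -- Step: entropy of π₂ at most log A
  have hA1 : (1:ℝ) ≤ A := by exact_mod_cast hA
  have hApos : (0:ℝ) < A := by linarith
  have hH2 : -∑ a, π₂ a * Real.log (π₂ a) ≤ Real.log A := by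
    have hj := convexOn_mul_log.map_sum_le (t := Finset.univ) (w := fun _ : Fin A => (A:ℝ)⁻¹)
      (p := π₂) (fun i _ => by positivity) (by simp [Finset.card_univ]; field_simp)
      (fun i _ => Set.mem_Ici.2 (hπ₂0 i))
    simp only [smul_eq_mul, ← Finset.mul_sum, hπ₂1, mul_one] at hj
    have hlog : (A:ℝ)⁻¹ * Real.log ((A:ℝ)⁻¹) = -((A:ℝ)⁻¹ * Real.log A) := by
      rw [Real.log_inv]; ring
    rw [hlog] at hj
    have hAne : (A:ℝ) ≠ 0 := hApos.ne'
    have h2 : -Real.log A ≤ ∑ a, π₂ a * Real.log (π₂ a) := by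
      have := mul_le_mul_of_nonneg_left hj hApos.le
      rw [mul_neg, ← mul_assoc, mul_inv_cancel₀ hAne, one_mul, ← mul_assoc,
        mul_inv_cancel₀ hAne, one_mul] at this
      exact this
    linarith
  -- Step: entropy of π₁ nonneg
  have hH1 : 0 ≤ -∑ a, π₁ a * Real.log (π₁ a) := by
    rw [neg_nonneg]
    apply Finset.sum_nonpos
    intro a _
    have h1 : π₁ a ≤ 1 := by
      rw [← hπ₁1]
      exact Finset.single_le_sum (fun i _ => (hπ₁0 i).le) (Finset.mem_univ a)
    exact Real.mul_log_nonpos (hπ₁0 a).le h1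
  -- Step: KL ≤ τ log A
  have hKLle : KL ≤ τ * Real.log A := by
    have h := hmin π₁ (fun a => (hπ₁0 a).le) hπ₁1
    simp only [div_self (hπ₁0 _).ne', Real.log_one, mul_zero, Finset.sum_const_zero,
      zero_sub] at h
    have h2 : KL ≤ τ * ((-∑ a, π₂ a * Real.log (π₂ a)) - (-∑ a, π₁ a * Real.log (π₁ a))) := by
      rw [mul_sub]; linarith
    calc KL ≤ τ * ((-∑ a, π₂ a * Real.log (π₂ a)) - (-∑ a, π₁ a * Real.log (π₁ a))) := h2
      _ ≤ τ * Real.log A := by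
          apply mul_le_mul_of_nonneg_left _ hτ
          linarith
  -- Step: spm_pointwise lower bound on KL
  have hsum_eq : KL = ∑ a, (π₂ a * Real.log (π₂ a / π₁ a) - π₂ a + π₁ a) := by
    rw [hKL]
    rw [Finset.sum_add_distrib, Finset.sum_sub_distrib, hπ₂1, hπ₁1]
    ring
  have hpw : ∑ a, 3*(π₂ a - π₁ a)^2/(2*(π₂ a + 2*π₁ a)) ≤ KL := by
    rw [hsum_eq]
    exact Finset.sum_le_sum (fun a _ => spm_pointwise (π₂ a) (π₁ a) (hπ₂0 a) (hπ₁0 a))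
  -- Cauchy-Schwarz
  have hs : ∀ a, (0:ℝ) < π₂ a + 2*π₁ a := fun a => by have := hπ₂0 a; have := hπ₁0 a; linarith
  have hCS : (∑ a, |π₂ a - π₁ a|)^2 ≤
      (∑ a, (π₂ a - π₁ a)^2/(π₂ a + 2*π₁ a)) * (∑ a, (π₂ a + 2*π₁ a)) := by
    have := Finset.sum_mul_sq_le_sq_mul_sq Finset.univ
      (fun a => |π₂ a - π₁ a| / Real.sqrt (π₂ a + 2*π₁ a))
      (fun a => Real.sqrt (π₂ a + 2*π₁ a))
    have heq1 : ∀ a : Fin A, |π₂ a - π₁ a| / Real.sqrt (π₂ a + 2*π₁ a) * Real.sqrt (π₂ a + 2*π₁ a)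
        = |π₂ a - π₁ a| := fun a => by
      rw [div_mul_cancel₀]
      exact (Real.sqrt_pos.2 (hs a)).ne'
    have heq2 : ∀ a : Fin A, (|π₂ a - π₁ a| / Real.sqrt (π₂ a + 2*π₁ a))^2
        = (π₂ a - π₁ a)^2/(π₂ a + 2*π₁ a) := fun a => by
      rw [div_pow, sq_abs, Real.sq_sqrt (hs a).le]
    have heq3 : ∀ a : Fin A, (Real.sqrt (π₂ a + 2*π₁ a))^2 = π₂ a + 2*π₁ a := fun a =>
      Real.sq_sqrt (hs a).le
    simp only [heq1, heq2, heq3] at this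
    exact this
  have hsum3 : (∑ a, (π₂ a + 2*π₁ a)) = 3 := by
    rw [Finset.sum_add_distrib, hπ₂1, ← Finset.mul_sum, hπ₁1]; norm_num
  have hfinal : (∑ a, |π₂ a - π₁ a|)^2 ≤ 2 * τ * Real.log A := by
    have h3 : (∑ a, (π₂ a - π₁ a)^2/(π₂ a + 2*π₁ a)) * 3 ≤ 2 * KL := by
      have : ∑ a, 3*(π₂ a - π₁ a)^2/(2*(π₂ a + 2*π₁ a))
          = (3/2) * ∑ a, (π₂ a - π₁ a)^2/(π₂ a + 2*π₁ a) := by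
        rw [Finset.mul_sum]
        apply Finset.sum_congr rfl
        intro a _
        field_simp
      rw [this] at hpw
      linarith
    calc (∑ a, |π₂ a - π₁ a|)^2 ≤ (∑ a, (π₂ a - π₁ a)^2/(π₂ a + 2*π₁ a)) * 3 := by
          rw [← hsum3]; exact hCS
      _ ≤ 2 * KL := h3
      _ ≤ 2 * (τ * Real.log A) := by linarith
      _ = 2 * τ * Real.log A := by ring
  have hnn : 0 ≤ ∑ a, |π₂ a - π₁ a| := Finset.sum_nonneg (fun a _ => abs_nonneg _)
  have h2τ : 0 ≤ 2 * τ * Real.log A := by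
    have := Real.log_nonneg hA1
    nlinarith
  exact (Real.le_sqrt hnn h2τ).2 hfinal
end

section
/- Let q be a vector indexed by a finite action set with ‖q‖_∞ ≤ H, let η > 0, let π be a probability distribution on the actions, and let π' be the minimizer over the simplex of the function μ ↦ −η⟨q, μ⟩ + KL(μ ‖ π). Then ‖π' − π‖₁ ≤ 2ηH. -/
noncomputable def mdR (t : ℝ) : ℝ := Real.log t - 3/2 * ((t-1)*(t+5)) / (t+2)^2

noncomputable def mdG (t : ℝ) : ℝ := t * Real.log t - t + 1 - 3*(t-1)^2/(2*(t+2))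

lemma mdR_hasDeriv {t : ℝ} (ht : 0 < t) :
    HasDerivAt mdR ((t-1)^2*(t+8)/(t*(t+2)^3)) t := by
  have h2 : (t:ℝ) + 2 ≠ 0 := by positivity
  have hnum : HasDerivAt (fun t : ℝ => (t-1)*(t+5)) (1*(t+5)+(t-1)*1) t :=
    (((hasDerivAt_id t).sub_const 1).mul ((hasDerivAt_id t).add_const 5))
  have hden : HasDerivAt (fun t : ℝ => (t+2)^2) (2*(t+2)^1*1) t :=
    ((hasDerivAt_id t).add_const 2).pow 2
  have hdiv := hnum.div hden (by positivity)
  have hlog := Real.hasDerivAt_log ht.ne'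
  have ht' : t ≠ 0 := ht.ne'
  have := hlog.sub ((hdiv.const_mul (3/2 : ℝ)))
  unfold mdR
  convert this using 1
  · rfl
  · rfl
  · simp only [mul_div_assoc]
    ext x; simp only [Pi.sub_apply, Pi.div_apply]; ring
  · rw [div_eq_iff (by positivity : t*(t+2)^3 ≠ 0)]
    field_simp
    ring

lemma mdG_hasDeriv {t : ℝ} (ht : 0 < t) : HasDerivAt mdG (mdR t) t := by
  have h2 : (t:ℝ) + 2 ≠ 0 := by positivity
  have h1 : HasDerivAt (fun t : ℝ => t * Real.log t) (1 * Real.log t + t * t⁻¹) t :=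
    (hasDerivAt_id t).mul (Real.hasDerivAt_log ht.ne')
  have hnum : HasDerivAt (fun t : ℝ => 3*(t-1)^2) (3*(2*(t-1)^1*1)) t :=
    (((hasDerivAt_id t).sub_const 1).pow 2).const_mul 3
  have hden : HasDerivAt (fun t : ℝ => 2*(t+2)) (2*1) t :=
    ((hasDerivAt_id t).add_const 2).const_mul 2
  have hdiv := hnum.div hden (by positivity)
  have := ((h1.sub (hasDerivAt_id t)).add_const 1).sub hdiv
  unfold mdG
  convert this using 1
  · rfl
  · rfl
  · rfl
  unfold mdR
  rw [mul_inv_cancel₀ ht.ne']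
  field_simp
  ring

lemma mdR_mono : MonotoneOn mdR (Set.Ioi (0:ℝ)) := by
  apply monotoneOn_of_deriv_nonneg (convex_Ioi 0)
  · exact fun t ht => (mdR_hasDeriv ht).differentiableAt.continuousAt.continuousWithinAt
  · rw [interior_Ioi]
    exact fun t ht => (mdR_hasDeriv ht).differentiableAt.differentiableWithinAt
  · rw [interior_Ioi]
    intro t ht
    rw [(mdR_hasDeriv ht).deriv]
    have : (0:ℝ) < t := ht
    positivity

lemma mdR_one : mdR 1 = 0 := by simp [mdR]

lemma mdG_one : mdG 1 = 0 := by simp [mdG]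

lemma mdG_nonneg {t : ℝ} (ht : 0 < t) : 0 ≤ mdG t := by
  rcases le_or_gt 1 t with h | h
  · have hmono : MonotoneOn mdG (Set.Ici (1:ℝ)) := by
      apply monotoneOn_of_deriv_nonneg (convex_Ici 1)
      · exact fun s hs => (mdG_hasDeriv (lt_of_lt_of_le one_pos hs)).differentiableAt.continuousAt.continuousWithinAt
      · rw [interior_Ici]
        exact fun s hs => (mdG_hasDeriv (lt_trans one_pos hs)).differentiableAt.differentiableWithinAt
      · rw [interior_Ici]
        intro s hs
        rw [(mdG_hasDeriv (lt_trans one_pos hs)).deriv]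
        have := mdR_mono (Set.mem_Ioi.2 one_pos) (Set.mem_Ioi.2 (lt_trans one_pos hs)) (le_of_lt hs)
        rwa [mdR_one] at this
    have := hmono (Set.mem_Ici.2 le_rfl) (Set.mem_Ici.2 h) h
    rwa [mdG_one] at this
  · have hanti : AntitoneOn mdG (Set.Ioc (0:ℝ) 1) := by
      apply antitoneOn_of_deriv_nonpos (convex_Ioc 0 1)
      · exact fun s hs => (mdG_hasDeriv hs.1).differentiableAt.continuousAt.continuousWithinAt
      · rw [interior_Ioc]
        exact fun s hs => (mdG_hasDeriv hs.1).differentiableAt.differentiableWithinAt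
      · rw [interior_Ioc]
        intro s hs
        rw [(mdG_hasDeriv hs.1).deriv]
        have := mdR_mono (Set.mem_Ioi.2 hs.1) (Set.mem_Ioi.2 one_pos) (le_of_lt hs.2)
        rwa [mdR_one] at this
    have := hanti (Set.mem_Ioc.2 ⟨ht, h.le⟩) (Set.mem_Ioc.2 ⟨one_pos, le_rfl⟩) h.le
    rwa [mdG_one] at this

lemma md_pointwise {x y : ℝ} (hx : 0 ≤ x) (hy : 0 < y) :
    3*(x-y)^2/(2*(x+2*y)) ≤ x * Real.log (x/y) - x + y := by
  rcases eq_or_lt_of_le hx with h | h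
  · have hx0 : x = 0 := h.symm
    subst hx0
    have h1 : 3*((0:ℝ)-y)^2/(2*(0+2*y)) = 3*y/4 := by field_simp; ring
    rw [h1]
    simp only [zero_mul, zero_sub, neg_zero, zero_add]
    linarith
  · have ht : 0 < x / y := div_pos h hy
    have hg := mdG_nonneg ht
    unfold mdG at hg
    have h2 : x/y + 2 ≠ 0 := by positivity
    have key : 3*(x-y)^2/(2*(x+2*y)) = y * (3*(x/y-1)^2/(2*(x/y+2))) := by
      field_simp
    rw [key]
    have h3 : 3*(x/y-1)^2/(2*(x/y+2)) ≤ (x/y) * Real.log (x/y) - x/y + 1 := by linarith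
    calc y * (3*(x/y-1)^2/(2*(x/y+2))) ≤ y * ((x/y) * Real.log (x/y) - x/y + 1) :=
          mul_le_mul_of_nonneg_left h3 hy.le
      _ = x * Real.log (x/y) - x + y := by
          field_simp

/-- One-step movement bound for the mirror descent / NPG update:
`‖π' - π‖₁ ≤ 2 η H`. -/
theorem mirror_descent_movement (A : ℕ) (hA : 0 < A)
    (q : Fin A → ℝ) (H : ℝ) (hq : ∀ a, |q a| ≤ H)
    (η : ℝ) (hη : 0 < η)
    (π : Fin A → ℝ) (hπ0 : ∀ a, 0 < π a) (hπ1 : ∑ a, π a = 1)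
    (π' : Fin A → ℝ) (hπ'0 : ∀ a, 0 ≤ π' a) (hπ'1 : ∑ a, π' a = 1)
    (hmin : ∀ μ : Fin A → ℝ, (∀ a, 0 ≤ μ a) → ∑ a, μ a = 1 →
      (-η * ∑ a, q a * π' a) + (∑ a, π' a * Real.log (π' a / π a)) ≤
        (-η * ∑ a, q a * μ a) + (∑ a, μ a * Real.log (μ a / π a))) :
    ∑ a, |π' a - π a| ≤ 2 * η * H := by
  classical
  set S := ∑ a, |π' a - π a| with hS
  set KL := ∑ a, π' a * Real.log (π' a / π a) with hKLdef
  set T := ∑ a, (π' a - π a)^2 / (π' a + 2 * π a) with hT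
  have hS0 : 0 ≤ S := Finset.sum_nonneg fun a _ => abs_nonneg _
  have hH : 0 ≤ H := le_trans (abs_nonneg _) (hq ⟨0, hA⟩)
  have hzero : ∑ a, π a * Real.log (π a / π a) = 0 := by
    apply Finset.sum_eq_zero; intro a _
    rw [div_self (hπ0 a).ne', Real.log_one, mul_zero]
  have hmin' := hmin π (fun a => (hπ0 a).le) hπ1
  rw [hzero] at hmin'
  have hsplit : ∑ a, q a * π' a - ∑ a, q a * π a = ∑ a, q a * (π' a - π a) := by
    rw [← Finset.sum_sub_distrib]
    exact Finset.sum_congr rfl fun a _ => by ring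
  have hKL1 : KL ≤ η * ∑ a, q a * (π' a - π a) := by
    rw [← hsplit]; nlinarith [hmin']
  have hKL2 : ∑ a, q a * (π' a - π a) ≤ H * S := by
    calc ∑ a, q a * (π' a - π a) ≤ ∑ a, |q a * (π' a - π a)| :=
          Finset.sum_le_sum fun a _ => le_abs_self _
      _ = ∑ a, |q a| * |π' a - π a| := by simp [abs_mul]
      _ ≤ ∑ a, H * |π' a - π a| :=
          Finset.sum_le_sum fun a _ => mul_le_mul_of_nonneg_right (hq a) (abs_nonneg _)
      _ = H * S := by rw [hS, Finset.mul_sum]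
  have hKL : KL ≤ η * (H * S) :=
    le_trans hKL1 (mul_le_mul_of_nonneg_left hKL2 hη.le)
  have hden : ∀ a, (0:ℝ) < π' a + 2 * π a := fun a => by
    have := hπ'0 a; have := hπ0 a; linarith
  have hsed : S^2 / 3 ≤ T := by
    have h3 : ∑ a : Fin A, (π' a + 2 * π a) = 3 := by
      rw [Finset.sum_add_distrib, ← Finset.mul_sum, hπ'1, hπ1]; norm_num
    have h := Finset.sq_sum_div_le_sum_sq_div Finset.univ (fun a => |π' a - π a|)
      (fun a _ => hden a)
    rw [hS, hT]
    simpa [sq_abs, h3] using h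
  have hpointsum : 3/2 * T ≤ KL := by
    have hterm : ∀ a : Fin A, 3/2 * ((π' a - π a)^2 / (π' a + 2 * π a)) ≤
        π' a * Real.log (π' a / π a) - π' a + π a := by
      intro a
      have h := md_pointwise (hπ'0 a) (hπ0 a)
      have heq : 3*(π' a - π a)^2/(2*(π' a + 2*π a)) =
          3/2 * ((π' a - π a)^2 / (π' a + 2 * π a)) := by
        have he : π' a + 2 * π a ≠ 0 := (hden a).ne'
        field_simp
      linarith [heq ▸ h]
    calc 3/2 * T = ∑ a, 3/2 * ((π' a - π a)^2 / (π' a + 2 * π a)) := by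
          rw [hT, Finset.mul_sum]
      _ ≤ ∑ a, (π' a * Real.log (π' a / π a) - π' a + π a) :=
          Finset.sum_le_sum fun a _ => hterm a
      _ = KL := by
          rw [Finset.sum_add_distrib, Finset.sum_sub_distrib, hπ'1, hπ1, hKLdef]
          ring
  have hfin : S^2 ≤ 2 * η * H * S := by nlinarith
  rcases hS0.eq_or_lt with h | h
  · rw [← h]; positivity
  · nlinarith
end

section
/- Let π_t and π_{t−1} be policies in a finite discounted MDP with discount γ ∈ (0,1), rewards in [0,1], action set of size A, and entropy coefficient τ ≥ 0, with H_τ = (1 + τ ln A)/(1−γ). Then the entropy-regularized value functions satisfy ‖v_τ^{π_t} − v_τ^{π_{t−1}}‖_∞ ≤ (H_τ/(1−γ)) · max_s [ ‖π_t(·|s) − π_{t−1}(·|s)‖₁ + τ(1−γ) |H(π_t(·|s)) − H(π_{t−1}(·|s))| ]. -/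
/-- Difference of entropy-regularized value functions of two policies. -/
theorem value_function_diff_bound
    (S A : Type*) [Fintype S] [Fintype A] [Nonempty S] [Nonempty A]
    (γ : ℝ) (hγ0 : 0 < γ) (hγ1 : γ < 1)
    (r : S → A → ℝ) (hr : ∀ s a, r s a ∈ Set.Icc (0 : ℝ) 1)
    (Pr : S → A → S → ℝ) (hPr0 : ∀ s a s', 0 ≤ Pr s a s')
    (hPr1 : ∀ s a, ∑ s', Pr s a s' = 1)
    (τ : ℝ) (hτ : 0 ≤ τ)
    (Hτ : ℝ) (hHτ : Hτ = (1 + τ * Real.log (Fintype.card A)) / (1 - γ))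
    (π₁ π₂ : S → A → ℝ)
    (hπ₁0 : ∀ s a, 0 < π₁ s a) (hπ₁1 : ∀ s, ∑ a, π₁ s a = 1)
    (hπ₂0 : ∀ s a, 0 < π₂ s a) (hπ₂1 : ∀ s, ∑ a, π₂ s a = 1)
    (v₁ v₂ : S → ℝ)
    (hv₁ : ∀ s, v₁ s = ∑ a, π₁ s a *
      (r s a - τ * Real.log (π₁ s a) + γ * ∑ s', Pr s a s' * v₁ s'))
    (hv₂ : ∀ s, v₂ s = ∑ a, π₂ s a *
      (r s a - τ * Real.log (π₂ s a) + γ * ∑ s', Pr s a s' * v₂ s'))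
    (hv₁b : ∀ s, v₁ s ∈ Set.Icc 0 Hτ) (hv₂b : ∀ s, v₂ s ∈ Set.Icc 0 Hτ) :
    ‖v₁ - v₂‖ ≤ (Hτ / (1 - γ)) *
      (Finset.univ.sup' Finset.univ_nonempty fun s =>
        (∑ a, |π₁ s a - π₂ s a|) + τ * (1 - γ) *
          |(-∑ a, π₁ s a * Real.log (π₁ s a)) -
            (-∑ a, π₂ s a * Real.log (π₂ s a))|) := by
  have h1γ : (0:ℝ) < 1 - γ := by linarith
  set N := ‖v₁ - v₂‖ with hN
  set f : S → ℝ := fun s =>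
        (∑ a, |π₁ s a - π₂ s a|) + τ * (1 - γ) *
          |(-∑ a, π₁ s a * Real.log (π₁ s a)) -
            (-∑ a, π₂ s a * Real.log (π₂ s a))| with hf
  set D := Finset.univ.sup' Finset.univ_nonempty f with hD
  have hlog : (0:ℝ) ≤ Real.log (Fintype.card A) :=
    Real.log_nonneg (by exact_mod_cast Fintype.card_pos)
  have hHτ1 : 1 ≤ Hτ * (1 - γ) := by
    rw [hHτ, div_mul_cancel₀ _ h1γ.ne']
    nlinarith
  have hHτ0 : 0 < Hτ := by nlinarith
  have hfD : ∀ s, f s ≤ D := fun s => Finset.le_sup' f (Finset.mem_univ s)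
  have hf0 : ∀ s, 0 ≤ f s := by
    intro s
    apply add_nonneg
    · exact Finset.sum_nonneg fun a _ => abs_nonneg _
    · positivity
  have hD0 : 0 ≤ D := le_trans (hf0 Classical.ofNonempty) (hfD _)
  have hNb : ∀ s', |v₁ s' - v₂ s'| ≤ N := by
    intro s'
    have := norm_le_pi_norm (v₁ - v₂) s'
    simpa [Real.norm_eq_abs] using this
  have hN0 : 0 ≤ N := norm_nonneg _
  -- pointwise key bound
  have key : ∀ s, |v₁ s - v₂ s| ≤ Hτ * D + γ * N := by
    intro s
    have expand : v₁ s - v₂ s =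
        (∑ a, (π₁ s a - π₂ s a) * (r s a + γ * ∑ s', Pr s a s' * v₂ s'))
        + (∑ a, τ * (π₂ s a * Real.log (π₂ s a) - π₁ s a * Real.log (π₁ s a)))
        + (∑ a, γ * (π₁ s a *
            (∑ s', Pr s a s' * v₁ s' - ∑ s', Pr s a s' * v₂ s'))) := by
      rw [hv₁ s, hv₂ s, ← Finset.sum_sub_distrib, ← Finset.sum_add_distrib,
        ← Finset.sum_add_distrib]
      apply Finset.sum_congr rfl
      intro a _
      have : ∑ s', Pr s a s' * v₁ s' - ∑ s', Pr s a s' * v₂ s'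
          = ∑ s', (Pr s a s' * v₁ s' - Pr s a s' * v₂ s') := by
        rw [Finset.sum_sub_distrib]
      rw [this, Finset.sum_sub_distrib]
      ring
    have hA : |∑ a, (π₁ s a - π₂ s a) * (r s a + γ * ∑ s', Pr s a s' * v₂ s')|
        ≤ (1 + γ * Hτ) * ∑ a, |π₁ s a - π₂ s a| := by
      calc |∑ a, (π₁ s a - π₂ s a) * (r s a + γ * ∑ s', Pr s a s' * v₂ s')|
          ≤ ∑ a, |(π₁ s a - π₂ s a) * (r s a + γ * ∑ s', Pr s a s' * v₂ s')| :=
            Finset.abs_sum_le_sum_abs _ _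
        _ ≤ ∑ a, |π₁ s a - π₂ s a| * (1 + γ * Hτ) := by
            apply Finset.sum_le_sum
            intro a _
            rw [abs_mul]
            apply mul_le_mul_of_nonneg_left _ (abs_nonneg _)
            have hQ0 : 0 ≤ ∑ s', Pr s a s' * v₂ s' :=
              Finset.sum_nonneg fun s' _ =>
                mul_nonneg (hPr0 s a s') (hv₂b s').1
            have hQ1 : ∑ s', Pr s a s' * v₂ s' ≤ Hτ := by
              calc ∑ s', Pr s a s' * v₂ s' ≤ ∑ s', Pr s a s' * Hτ :=
                    Finset.sum_le_sum fun s' _ =>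
                      mul_le_mul_of_nonneg_left (hv₂b s').2 (hPr0 s a s')
                _ = Hτ := by rw [← Finset.sum_mul, hPr1 s a, one_mul]
            rw [abs_of_nonneg (by nlinarith [(hr s a).1])]
            nlinarith [(hr s a).2]
        _ = (1 + γ * Hτ) * ∑ a, |π₁ s a - π₂ s a| := by
            rw [← Finset.sum_mul, mul_comm]
    have hB : |∑ a, τ * (π₂ s a * Real.log (π₂ s a) - π₁ s a * Real.log (π₁ s a))|
        = τ * |(-∑ a, π₁ s a * Real.log (π₁ s a)) -
            (-∑ a, π₂ s a * Real.log (π₂ s a))| := by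
      have hsum : ∑ a, τ * (π₂ s a * Real.log (π₂ s a) - π₁ s a * Real.log (π₁ s a))
          = τ * ((-∑ a, π₁ s a * Real.log (π₁ s a)) -
            (-∑ a, π₂ s a * Real.log (π₂ s a))) := by
        rw [← Finset.mul_sum, Finset.sum_sub_distrib]
        ring
      rw [hsum, abs_mul, abs_of_nonneg hτ]
    have hC : |∑ a, γ * (π₁ s a *
        (∑ s', Pr s a s' * v₁ s' - ∑ s', Pr s a s' * v₂ s'))| ≤ γ * N := by
      calc |∑ a, γ * (π₁ s a * (∑ s', Pr s a s' * v₁ s' - ∑ s', Pr s a s' * v₂ s'))|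
          ≤ ∑ a, |γ * (π₁ s a * (∑ s', Pr s a s' * v₁ s' - ∑ s', Pr s a s' * v₂ s'))| :=
            Finset.abs_sum_le_sum_abs _ _
        _ ≤ ∑ a, γ * (π₁ s a * N) := by
            apply Finset.sum_le_sum
            intro a _
            rw [abs_mul, abs_of_pos hγ0, abs_mul, abs_of_pos (hπ₁0 s a)]
            apply mul_le_mul_of_nonneg_left _ hγ0.le
            apply mul_le_mul_of_nonneg_left _ (hπ₁0 s a).le
            have : ∑ s', Pr s a s' * v₁ s' - ∑ s', Pr s a s' * v₂ s'
                = ∑ s', Pr s a s' * (v₁ s' - v₂ s') := by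
              rw [← Finset.sum_sub_distrib]
              exact Finset.sum_congr rfl fun s' _ => (mul_sub _ _ _).symm
            rw [this]
            calc |∑ s', Pr s a s' * (v₁ s' - v₂ s')|
                ≤ ∑ s', |Pr s a s' * (v₁ s' - v₂ s')| := Finset.abs_sum_le_sum_abs _ _
              _ ≤ ∑ s', Pr s a s' * N := by
                  apply Finset.sum_le_sum
                  intro s' _
                  rw [abs_mul, abs_of_nonneg (hPr0 s a s')]
                  exact mul_le_mul_of_nonneg_left (hNb s') (hPr0 s a s')
              _ = N := by rw [← Finset.sum_mul, hPr1 s a, one_mul]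
        _ = γ * N := by
            simp only [← Finset.mul_sum, ← Finset.sum_mul, hπ₁1 s, one_mul]
    have htri := abs_add_le
      ((∑ a, (π₁ s a - π₂ s a) * (r s a + γ * ∑ s', Pr s a s' * v₂ s'))
        + (∑ a, τ * (π₂ s a * Real.log (π₂ s a) - π₁ s a * Real.log (π₁ s a))))
      (∑ a, γ * (π₁ s a *
            (∑ s', Pr s a s' * v₁ s' - ∑ s', Pr s a s' * v₂ s')))
    have htri2 := abs_add_le
      (∑ a, (π₁ s a - π₂ s a) * (r s a + γ * ∑ s', Pr s a s' * v₂ s'))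
      (∑ a, τ * (π₂ s a * Real.log (π₂ s a) - π₁ s a * Real.log (π₁ s a)))
    rw [expand]
    have hL0 : 0 ≤ ∑ a, |π₁ s a - π₂ s a| :=
      Finset.sum_nonneg fun a _ => abs_nonneg _
    have hE0 : 0 ≤ |(-∑ a, π₁ s a * Real.log (π₁ s a)) -
            (-∑ a, π₂ s a * Real.log (π₂ s a))| := abs_nonneg _
    have hfDs := hfD s
    rw [hf] at hfDs
    simp only [] at hfDs
    have h1 : (0:ℝ) ≤ Hτ * (1 - γ) - 1 := by linarith
    nlinarith [hA, hB, hC, htri, htri2,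
      mul_le_mul_of_nonneg_left hfDs hHτ0.le,
      mul_nonneg h1 hL0, mul_nonneg h1 (mul_nonneg hτ hE0)]
  have hmain : N ≤ Hτ * D + γ * N := by
    rw [hN]
    apply (pi_norm_le_iff_of_nonneg (by positivity)).2
    intro s
    rw [Pi.sub_apply, Real.norm_eq_abs]
    exact key s
  rw [div_mul_eq_mul_div, le_div_iff₀ h1γ]
  nlinarith
end

section
/- Consider the regularized online mirror descent iteration on the simplex of dimension A: given linear losses fₜ(π) = ⟨π, dₜ⟩ with ‖dₜ‖_∞ ≤ Dₜ, step sizes ηₜ > 0, τₜ = ηₜ τ for a fixed τ ≥ 0, regularizer R(π) = ln(A) − H(π), uniform initialization π₀, and updates π_{t+1} = argmin over the simplex of ⟨π, dₜ⟩ + KL(π ‖ πₜ) + τₜ R(π). Then for any comparator u in the simplex, ∑_{t=0}^{K−1} [⟨πₜ − u, dₜ⟩/ηₜ + τ(H(u) − H(πₜ))] ≤ ∑_{t=0}^{K−1} [KL(u‖πₜ)/ηₜ − KL(u‖π_{t+1})/ηₜ − τ KL(u‖π_{t+1})] + ∑_{t=0}^{K−1} Dₜ²/(2ηₜ). -/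
/-- KL divergence on the simplex over `Fin A`. -/
noncomputable def KLdiv {A : ℕ} (p q : Fin A → ℝ) : ℝ := ∑ a, p a * Real.log (p a / q a)

/-- Shannon entropy on the simplex over `Fin A`. -/
noncomputable def Hent {A : ℕ} (p : Fin A → ℝ) : ℝ := -∑ a, p a * Real.log (p a)


noncomputable def phiAux (s : ℝ) : ℝ := (s - 1) * (s + 5) / (2 * (2 * s + 1)) - Real.log s

lemma phiAux_hasDeriv (s : ℝ) (hs : 0 < s) :
    HasDerivAt phiAux ((s - 1) ^ 3 / (s * (2 * s + 1) ^ 2)) s := by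
  have hden : (2 * (2 * s + 1)) ≠ 0 := by positivity
  have h1 : HasDerivAt (fun t : ℝ => (t - 1) * (t + 5)) (1 * (s + 5) + (s - 1) * 1) s :=
    ((hasDerivAt_id s).sub_const 1).mul ((hasDerivAt_id s).add_const 5)
  have h2 : HasDerivAt (fun t : ℝ => 2 * (2 * t + 1)) (2 * 2) s := by
    simpa using (((hasDerivAt_id s).const_mul 2).add_const 1).const_mul 2
  have h3 := (h1.div h2 hden).sub (Real.hasDerivAt_log hs.ne')
  refine h3.congr_deriv ?_
  have hs0 : s ≠ 0 := hs.ne'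
  field_simp
  ring

lemma log_le_aux (s : ℝ) (hs : 0 < s) :
    Real.log s ≤ (s - 1) * (s + 5) / (2 * (2 * s + 1)) := by
  have key : 0 ≤ phiAux s := by
    have h1 : phiAux 1 = 0 := by simp [phiAux]
    rcases le_or_gt 1 s with h | h
    · have mono : MonotoneOn phiAux (Set.Ici 1) := by
        apply monotoneOn_of_hasDerivWithinAt_nonneg (convex_Ici 1)
          (f' := fun x => (x - 1) ^ 3 / (x * (2 * x + 1) ^ 2))
        · intro x hx
          exact (phiAux_hasDeriv x (lt_of_lt_of_le one_pos (by exact hx))).continuousAt.continuousWithinAt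
        · intro x hx
          rw [interior_Ici] at hx
          exact (phiAux_hasDeriv x (lt_trans one_pos hx)).hasDerivWithinAt
        · intro x hx
          rw [interior_Ici] at hx
          have hx1 : (1:ℝ) < x := hx
          have hx0 : (0:ℝ) < x := lt_trans one_pos hx1
          have hnum : (0:ℝ) ≤ (x - 1) ^ 3 := pow_nonneg (by linarith) 3
          have hd : (0:ℝ) < x * (2 * x + 1) ^ 2 := by positivity
          exact div_nonneg hnum hd.le
      have := mono (Set.mem_Ici.2 le_rfl) (Set.mem_Ici.2 h) h
      rw [h1] at this; exact this
    · have anti : AntitoneOn phiAux (Set.Ioc 0 1) := by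
        apply antitoneOn_of_hasDerivWithinAt_nonpos (convex_Ioc 0 1)
          (f' := fun x => (x - 1) ^ 3 / (x * (2 * x + 1) ^ 2))
        · intro x hx
          exact (phiAux_hasDeriv x hx.1).continuousAt.continuousWithinAt
        · intro x hx
          rw [interior_Ioc] at hx
          exact (phiAux_hasDeriv x hx.1).hasDerivWithinAt
        · intro x hx
          rw [interior_Ioc] at hx
          have hx0 : (0:ℝ) < x := hx.1
          have hx1 : x < 1 := hx.2
          have hnum : (x - 1) ^ 3 ≤ 0 := by nlinarith [sq_nonneg (x - 1)]
          have hd : (0:ℝ) < x * (2 * x + 1) ^ 2 := by positivity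
          exact div_nonpos_of_nonpos_of_nonneg hnum hd.le
      have := anti (Set.mem_Ioc.2 ⟨hs, h.le⟩) (Set.mem_Ioc.2 ⟨one_pos, le_rfl⟩) h.le
      rw [h1] at this; exact this
  unfold phiAux at key
  linarith



lemma kl_term_ge (x y : ℝ) (hx : 0 < x) (hy : 0 ≤ y) :
    y - x ≤ y * Real.log (y / x) := by
  rcases eq_or_lt_of_le hy with h | h
  · simp [← h]; linarith
  · have h1 : Real.log (x / y) ≤ x / y - 1 := Real.log_le_sub_one_of_pos (div_pos hx h)
    have h2 : Real.log (y / x) = -Real.log (x / y) := by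
      rw [← Real.log_inv]; congr 1; field_simp
    have h3 := mul_le_mul_of_nonneg_left h1 hy
    have h4 : y * (x / y - 1) = x - y := by field_simp
    rw [h2]; nlinarith
  
lemma kl_term_gt (x y : ℝ) (hx : 0 < x) (hy : 0 < y) (hne : y ≠ x) :
    y - x < y * Real.log (y / x) := by
  have hne1 : x / y ≠ 1 := by
    intro hcontra
    rw [div_eq_one_iff_eq hy.ne'] at hcontra
    exact hne hcontra.symm
  have h1 : Real.log (x / y) < x / y - 1 := Real.log_lt_sub_one_of_pos (div_pos hx hy) hne1
  have h2 : Real.log (y / x) = -Real.log (x / y) := by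
    rw [← Real.log_inv]; congr 1; field_simp
  have h3 := mul_lt_mul_of_pos_left h1 hy
  have h4 : y * (x / y - 1) = x - y := by field_simp
  rw [h2]; nlinarith

lemma kl_quad (x y : ℝ) (hx : 0 < x) (hy : 0 ≤ y) :
    3 * (x - y) ^ 2 ≤ 2 * (y + 2 * x) * (y * Real.log (y / x) + x - y) := by
  rcases eq_or_lt_of_le hy with h | h
  · rw [← h]; simp; nlinarith
  · have hB := log_le_aux (x / y) (div_pos hx h)
    have h2 : Real.log (y / x) = -Real.log (x / y) := by
      rw [← Real.log_inv]; congr 1; field_simp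
    have h3 := mul_le_mul_of_nonneg_left hB h.le
    have key : y * ((x / y - 1) * (x / y + 5) / (2 * (2 * (x / y) + 1))) =
        (x - y) - 3 * (x - y) ^ 2 / (2 * (2 * x + y)) := by
      have hd : (0:ℝ) < 2 * x + y := by linarith
      field_simp
      ring
    have h5 : y * Real.log (y / x) ≥ 3 * (x - y) ^ 2 / (2 * (2 * x + y)) - (x - y) := by
      rw [h2]; nlinarith
    have hd : (0:ℝ) < 2 * (2 * x + y) := by linarith
    have h6 : 3 * (x - y) ^ 2 / (2 * (2 * x + y)) * (2 * (2 * x + y)) = 3 * (x - y) ^ 2 := by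
      field_simp
    nlinarith [mul_le_mul_of_nonneg_left h5 (le_of_lt hd), h6, mul_le_mul_of_nonneg_right h5 hd.le]



lemma KLdiv_self_eq_zero {A : ℕ} (p : Fin A → ℝ) (hp : ∀ a, 0 < p a) : KLdiv p p = 0 := by
  unfold KLdiv
  apply Finset.sum_eq_zero
  intro a _
  rw [div_self (hp a).ne', Real.log_one, mul_zero]

lemma KLdiv_nonneg {A : ℕ} (p q : Fin A → ℝ) (hp : ∀ a, 0 ≤ p a) (hq : ∀ a, 0 < q a)
    (hp1 : ∑ a, p a = 1) (hq1 : ∑ a, q a = 1) : 0 ≤ KLdiv p q := by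
  have h := Finset.sum_le_sum (fun a (_ : a ∈ Finset.univ) => kl_term_ge (q a) (p a) (hq a) (hp a))
  rw [Finset.sum_sub_distrib, hp1, hq1] at h
  simpa [KLdiv] using h

lemma step_main {A : ℕ} (hA : 0 < A) (d : Fin A → ℝ) (Dt : ℝ) (hD : ∀ a, |d a| ≤ Dt)
    (ητ : ℝ) (hητ : 0 ≤ ητ)
    (x x' u : Fin A → ℝ)
    (hx0 : ∀ a, 0 < x a) (hx1 : ∑ a, x a = 1)
    (hx'0 : ∀ a, 0 < x' a) (hx'1 : ∑ a, x' a = 1)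
    (hu0 : ∀ a, 0 ≤ u a) (hu1 : ∑ a, u a = 1)
    (hopt : ∀ p : Fin A → ℝ, (∀ a, 0 ≤ p a) → ∑ a, p a = 1 →
      (∑ a, x' a * d a) + KLdiv x' x + ητ * (Real.log A - Hent x') ≤
      (∑ a, p a * d a) + KLdiv p (x) + ητ * (Real.log A - Hent p)) :
    (∑ a, (x a - u a) * d a) + ητ * (Hent u - Hent x') ≤
      KLdiv u x - (1 + ητ) * KLdiv u x' + Dt ^ 2 / 2 := by
  set c : ℝ := 1 + ητ with hc_def
  have hc : (0:ℝ) < c := by linarith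
  -- Gibbs distribution
  set q : Fin A → ℝ := fun a => Real.exp ((Real.log (x a) - d a) / c) with hq_def
  have hqpos : ∀ a, 0 < q a := fun a => Real.exp_pos _
  set Z : ℝ := ∑ a, q a with hZ_def
  have hZ : 0 < Z := Finset.sum_pos (fun a _ => hqpos a) (by simp [Finset.univ_nonempty_iff]; exact Fin.pos_iff_nonempty.mp hA)
  set q' : Fin A → ℝ := fun a => q a / Z with hq'_def
  have hq'0 : ∀ a, 0 < q' a := fun a => div_pos (hqpos a) hZ
  have hq'1 : ∑ a, q' a = 1 := by
    rw [hq'_def, ← Finset.sum_div, ← hZ_def, div_self hZ.ne']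
  have hlogq' : ∀ a, Real.log (q' a) = (Real.log (x a) - d a) / c - Real.log Z := by
    intro a
    rw [hq'_def]
    simp only
    rw [Real.log_div (hqpos a).ne' hZ.ne', hq_def]
    simp [Real.log_exp]
  -- the fundamental identity
  have ident : ∀ p : Fin A → ℝ, (∀ a, 0 ≤ p a) → ∑ a, p a = 1 →
      (∑ a, p a * d a) + KLdiv p x + ητ * (Real.log A - Hent p) =
        c * KLdiv p q' + (ητ * Real.log A - c * Real.log Z) := by
    intro p hp0 hp1
    have coord : ∀ a, p a * d a + p a * Real.log (p a / x a) + ητ * (p a * Real.log (p a))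
        + c * (p a * Real.log Z) = c * (p a * Real.log (p a / q' a)) := by
      intro a
      rcases eq_or_lt_of_le (hp0 a) with h | h
      · rw [← h]; simp
      · rw [Real.log_div h.ne' (hq'0 a).ne', Real.log_div h.ne' (hx0 a).ne', hlogq' a]
        field_simp
        ring
    have hsum := Finset.sum_congr rfl (fun a (_ : a ∈ Finset.univ) => coord a)
    unfold KLdiv Hent
    rw [Finset.sum_add_distrib, Finset.sum_add_distrib, Finset.sum_add_distrib,
      ← Finset.mul_sum, ← Finset.mul_sum, ← Finset.mul_sum, ← Finset.sum_mul, hp1, one_mul] at hsum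
    linarith [hsum]
  -- x' = q'
  have hKL0 : KLdiv x' q' = 0 := by
    have h1 := ident x' (fun a => (hx'0 a).le) hx'1
    have h2 := ident q' (fun a => (hq'0 a).le) hq'1
    have h3 := hopt q' (fun a => (hq'0 a).le) hq'1
    have h4 : KLdiv q' q' = 0 := KLdiv_self_eq_zero q' hq'0
    have h5 : c * KLdiv x' q' ≤ 0 := by rw [h4] at h2; linarith
    have h6 : 0 ≤ KLdiv x' q' := KLdiv_nonneg x' q' (fun a => (hx'0 a).le) hq'0 hx'1 hq'1
    nlinarith
  have hx'q : x' = q' := by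
    funext a
    by_contra hne
    have hterm : ∀ b ∈ Finset.univ, (0:ℝ) ≤ x' b * Real.log (x' b / q' b) - (x' b - q' b) :=
      fun b _ => by linarith [kl_term_ge (q' b) (x' b) (hq'0 b) (hx'0 b).le]
    have hsum : ∑ b, (x' b * Real.log (x' b / q' b) - (x' b - q' b)) = 0 := by
      rw [Finset.sum_sub_distrib, Finset.sum_sub_distrib, hx'1, hq'1]
      unfold KLdiv at hKL0
      rw [hKL0]; ring
    have hall := (Finset.sum_eq_zero_iff_of_nonneg hterm).mp hsum a (Finset.mem_univ a)
    have := kl_term_gt (q' a) (x' a) (hq'0 a) (hx'0 a) hne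
    linarith
  -- Pinsker / Fenchel-Young part
  have pinsker : (∑ a, (x a - q' a) * d a) ≤ KLdiv q' x + Dt ^ 2 / 2 := by
    have h1 : ∀ a ∈ Finset.univ, (x a - q' a) * d a ≤
        q' a * Real.log (q' a / x a) + (x a - q' a) + (q' a + 2 * x a) * (Dt ^ 2 / 6) := by
      intro a _
      have hkl := kl_quad (x a) (q' a) (hx0 a) (hq'0 a).le
      have hd2 : d a ^ 2 ≤ Dt ^ 2 := by
        have h := hD a
        nlinarith [abs_nonneg (d a), sq_abs (d a)]
      have hm : (0:ℝ) < q' a + 2 * x a := by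
        have := hq'0 a; have := hx0 a; linarith
      nlinarith [sq_nonneg (3 * (x a - q' a) - (q' a + 2 * x a) * d a),
        mul_nonneg (mul_nonneg hm.le hm.le) (sub_nonneg.2 hd2), hkl, hm]
    have h2 := Finset.sum_le_sum h1
    have h3 : ∑ a, (q' a * Real.log (q' a / x a) + (x a - q' a) + (q' a + 2 * x a) * (Dt ^ 2 / 6))
        = KLdiv q' x + Dt ^ 2 / 2 := by
      rw [Finset.sum_add_distrib, Finset.sum_add_distrib, Finset.sum_sub_distrib,
        ← Finset.sum_mul, Finset.sum_add_distrib, ← Finset.mul_sum, hq'1, hx1]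
      simp only [KLdiv]
      ring
    linarith [h2, h3]
  -- wrap up
  rw [hx'q]
  have hIu := ident u hu0 hu1
  have hIq := ident q' (fun a => (hq'0 a).le) hq'1
  have hq'q' : KLdiv q' q' = 0 := KLdiv_self_eq_zero q' hq'0
  rw [hq'q', mul_zero, zero_add] at hIq
  have hsplit1 : ∑ a, (x a - u a) * d a = (∑ a, x a * d a) - ∑ a, u a * d a := by
    rw [← Finset.sum_sub_distrib]
    exact Finset.sum_congr rfl (fun a _ => by ring)
  have hsplit2 : ∑ a, (x a - q' a) * d a = (∑ a, x a * d a) - ∑ a, q' a * d a := by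
    rw [← Finset.sum_sub_distrib]
    exact Finset.sum_congr rfl (fun a _ => by ring)
  clear_value c q Z q'
  linarith [hIu, hIq, pinsker, hsplit1, hsplit2]


lemma Hent_le_log {A : ℕ} (hA : 0 < A) (p : Fin A → ℝ) (hp0 : ∀ a, 0 < p a)
    (hp1 : ∑ a, p a = 1) : Hent p ≤ Real.log A := by
  have hA0 : ((A : ℝ)) ≠ 0 := Nat.cast_ne_zero.mpr hA.ne'
  have hApos : (0:ℝ) < A := Nat.cast_pos.mpr hA
  have hq : ∀ a : Fin A, (0:ℝ) < 1 / A := fun _ => by positivity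
  have hsum : ∑ _a : Fin A, (1:ℝ) / A = 1 := by
    rw [Finset.sum_const, Finset.card_univ, Fintype.card_fin, nsmul_eq_mul]
    field_simp
  have hKL := KLdiv_nonneg p (fun _ => 1 / A) (fun a => (hp0 a).le) hq hp1 hsum
  have hexp : KLdiv p (fun _ => 1 / (A:ℝ)) = -Hent p + Real.log A := by
    unfold KLdiv Hent
    have : ∀ a ∈ Finset.univ, p a * Real.log (p a / (1 / (A:ℝ)))
        = p a * Real.log (p a) + p a * Real.log A := by
      intro a _
      rw [div_div_eq_mul_div, div_one, Real.log_mul (hp0 a).ne' hA0]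
      ring
    rw [Finset.sum_congr rfl this, Finset.sum_add_distrib, ← Finset.sum_mul, hp1, one_mul]
    ring
  rw [hexp] at hKL
  linarith

/-- Regret bound for entropy-regularized online mirror descent on the simplex. -/
theorem omd_regret_bound (A : ℕ) (hA : 0 < A) (K : ℕ)
    (d : ℕ → Fin A → ℝ) (D : ℕ → ℝ) (hD : ∀ t a, |d t a| ≤ D t)
    (η : ℕ → ℝ) (hη : ∀ t, 0 < η t) (τ : ℝ) (hτ : 0 ≤ τ)
    (π : ℕ → Fin A → ℝ)
    (hπ0 : ∀ t a, 0 < π t a) (hπ1 : ∀ t, ∑ a, π t a = 1)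
    (hinit : ∀ a, π 0 a = 1 / A)
    (hupdate : ∀ t, ∀ p : Fin A → ℝ, (∀ a, 0 ≤ p a) → ∑ a, p a = 1 →
      (∑ a, π (t + 1) a * d t a) + KLdiv (π (t + 1)) (π t) +
          (η t * τ) * (Real.log A - Hent (π (t + 1))) ≤
        (∑ a, p a * d t a) + KLdiv p (π t) +
          (η t * τ) * (Real.log A - Hent p))
    (u : Fin A → ℝ) (hu0 : ∀ a, 0 ≤ u a) (hu1 : ∑ a, u a = 1) :
    ∑ t ∈ Finset.range K,
        ((∑ a, (π t a - u a) * d t a) / η t + τ * (Hent u - Hent (π t))) ≤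
      (∑ t ∈ Finset.range K,
        (KLdiv u (π t) / η t - KLdiv u (π (t + 1)) / η t -
          τ * KLdiv u (π (t + 1)))) +
      ∑ t ∈ Finset.range K, D t ^ 2 / (2 * η t) := by
  have key : ∀ t, (∑ a, (π t a - u a) * d t a) / η t + τ * (Hent u - Hent (π (t + 1))) ≤
      KLdiv u (π t) / η t - KLdiv u (π (t + 1)) / η t - τ * KLdiv u (π (t + 1)) +
        D t ^ 2 / (2 * η t) := by
    intro t
    have hs := step_main hA (d t) (D t) (hD t) (η t * τ) (mul_nonneg (hη t).le hτ)
      (π t) (π (t + 1)) u (hπ0 t) (hπ1 t) (hπ0 (t + 1)) (hπ1 (t + 1)) hu0 hu1 (hupdate t)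
    have hηt := hη t
    have hηt' : η t ≠ 0 := hηt.ne'
    have h2 : ((KLdiv u (π t) / η t - KLdiv u (π (t + 1)) / η t - τ * KLdiv u (π (t + 1)) +
          D t ^ 2 / (2 * η t)) -
        ((∑ a, (π t a - u a) * d t a) / η t + τ * (Hent u - Hent (π (t + 1))))) * η t =
        (KLdiv u (π t) - (1 + η t * τ) * KLdiv u (π (t + 1)) + D t ^ 2 / 2) -
        ((∑ a, (π t a - u a) * d t a) + (η t * τ) * (Hent u - Hent (π (t + 1)))) := by
      field_simp
      ring
    have h3 : 0 ≤ ((KLdiv u (π t) / η t - KLdiv u (π (t + 1)) / η t - τ * KLdiv u (π (t + 1)) +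
          D t ^ 2 / (2 * η t)) -
        ((∑ a, (π t a - u a) * d t a) / η t + τ * (Hent u - Hent (π (t + 1))))) * η t := by
      rw [h2]; linarith [hs]
    have h4 := le_of_mul_le_mul_right (by linarith [h3] :
      (0:ℝ) * η t ≤ ((KLdiv u (π t) / η t - KLdiv u (π (t + 1)) / η t -
        τ * KLdiv u (π (t + 1)) + D t ^ 2 / (2 * η t)) -
        ((∑ a, (π t a - u a) * d t a) / η t + τ * (Hent u - Hent (π (t + 1))))) * η t) hηt
    linarith [h4]
  have hA0 : ((A : ℝ)) ≠ 0 := Nat.cast_ne_zero.mpr hA.ne'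
  have hH0 : Hent (π 0) = Real.log A := by
    unfold Hent
    simp only [hinit]
    rw [Finset.sum_const, Finset.card_univ, Fintype.card_fin, nsmul_eq_mul, one_div,
      Real.log_inv]
    field_simp
  have hHK : Hent (π K) ≤ Real.log A := Hent_le_log hA (π K) (hπ0 K) (hπ1 K)
  have e1 : ∑ t ∈ Finset.range K,
      ((∑ a, (π t a - u a) * d t a) / η t + τ * (Hent u - Hent (π t))) =
      (∑ t ∈ Finset.range K,
        ((∑ a, (π t a - u a) * d t a) / η t + τ * (Hent u - Hent (π (t + 1))))) +
      τ * (Hent (π K) - Hent (π 0)) := by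
    rw [← Finset.sum_range_sub (fun t => Hent (π t)) K, Finset.mul_sum,
      ← Finset.sum_add_distrib]
    exact Finset.sum_congr rfl (fun t _ => by ring)
  have e2 : (∑ t ∈ Finset.range K,
        (KLdiv u (π t) / η t - KLdiv u (π (t + 1)) / η t - τ * KLdiv u (π (t + 1)))) +
      ∑ t ∈ Finset.range K, D t ^ 2 / (2 * η t) =
      ∑ t ∈ Finset.range K,
        (KLdiv u (π t) / η t - KLdiv u (π (t + 1)) / η t - τ * KLdiv u (π (t + 1)) +
          D t ^ 2 / (2 * η t)) := by
    rw [← Finset.sum_add_distrib]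
  have hsumle := Finset.sum_le_sum (fun t (_ : t ∈ Finset.range K) => key t)
  have hτH : τ * (Hent (π K) - Hent (π 0)) ≤ 0 := by
    rw [hH0]
    exact mul_nonpos_of_nonneg_of_nonpos hτ (by linarith)
  rw [e1, e2]
  linarith [hsumle, hτH]
end

section
/- In a finite discounted MDP with entropy regularization τ ≥ 0, discount γ ∈ (0,1), rewards in [0,1]: let π*_τ be the optimal entropy-regularized policy with value v*_τ, let {π₀,…,π_{K−1}} be any sequence of policies, let q_ζ^t be estimates with errors εₜ = q_ζ^t − q_τ^{πₜ}, and let the mixture policy satisfy v_τ^{π̄_K} = (1/K) ∑_{t=0}^{K−1} v_τ^{πₜ}. Then ‖v*_τ − v_τ^{π̄_K}‖_∞ ≤ ‖Regret(K)‖_∞ / (K(1−γ)) + 2 ∑_{t<K} ‖εₜ‖_∞ / (K(1−γ)), where Regret(K)(s) = ∑_{t=0}^{K−1} [⟨π*_τ(·|s) − πₜ(·|s), q_ζ^t(s,·)⟩ + τ(H(π*_τ(·|s)) − H(πₜ(·|s)))]. -/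
/-- Generic reduction of the sub-optimality of the mixture policy to
the regret and the policy evaluation errors. -/
theorem generic_reduction_with_actor_entropy
    (S A : Type*) [Fintype S] [Fintype A] [Nonempty S] [Nonempty A]
    (γ : ℝ) (hγ0 : 0 < γ) (hγ1 : γ < 1)
    (r : S → A → ℝ) (hr : ∀ s a, r s a ∈ Set.Icc (0 : ℝ) 1)
    (Pr : S → A → S → ℝ) (hPr0 : ∀ s a s', 0 ≤ Pr s a s')
    (hPr1 : ∀ s a, ∑ s', Pr s a s' = 1)
    (τ : ℝ) (hτ : 0 ≤ τ)
    (K : ℕ) (hK : 0 < K)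
    -- optimal entropy-regularized policy and its value function
    (πstar : S → A → ℝ) (hstar0 : ∀ s a, 0 < πstar s a)
    (hstar1 : ∀ s, ∑ a, πstar s a = 1)
    (vstar : S → ℝ)
    (hvstar : ∀ s, vstar s = ∑ a, πstar s a *
      (r s a - τ * Real.log (πstar s a) + γ * ∑ s', Pr s a s' * vstar s'))
    (hopt : ∀ (π : S → A → ℝ), (∀ s a, 0 < π s a) → (∀ s, ∑ a, π s a = 1) →
      ∀ (v : S → ℝ),
        (∀ s, v s = ∑ a, π s a *
          (r s a - τ * Real.log (π s a) + γ * ∑ s', Pr s a s' * v s')) →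
        ∀ s, v s ≤ vstar s)
    -- the sequence of policies and their regularized value functions
    (π : ℕ → S → A → ℝ) (hπ0 : ∀ t s a, 0 < π t s a)
    (hπ1 : ∀ t s, ∑ a, π t s a = 1)
    (v : ℕ → S → ℝ)
    (hv : ∀ t s, v t s = ∑ a, π t s a *
      (r s a - τ * Real.log (π t s a) + γ * ∑ s', Pr s a s' * v t s'))
    -- the q-function estimates and the evaluation errors
    (qest : ℕ → S → A → ℝ) (ε : ℕ → S → A → ℝ)
    (hε : ∀ t s a, ε t s a = qest t s a - (r s a + γ * ∑ s', Pr s a s' * v t s'))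
    -- the mixture policy value and the regret
    (vbar : S → ℝ) (hvbar : ∀ s, vbar s = (1 / (K : ℝ)) * ∑ t ∈ Finset.range K, v t s)
    (Reg : S → ℝ)
    (hReg : ∀ s, Reg s = ∑ t ∈ Finset.range K,
      ((∑ a, (πstar s a - π t s a) * qest t s a) +
        τ * ((-∑ a, πstar s a * Real.log (πstar s a)) -
          (-∑ a, π t s a * Real.log (π t s a))))) :
    ‖(fun s => vstar s - vbar s)‖ ≤
      ‖Reg‖ / ((K : ℝ) * (1 - γ)) +
        2 * (∑ t ∈ Finset.range K, ‖(fun p : S × A => ε t p.1 p.2)‖) /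
          ((K : ℝ) * (1 - γ)) := by
  classical
  have hKpos : (0:ℝ) < (K:ℝ) := by exact_mod_cast hK
  have h1γ : (0:ℝ) < 1 - γ := by linarith
  -- nonnegativity of the gaps
  have hΔ : ∀ t s, 0 ≤ vstar s - v t s := fun t s =>
    sub_nonneg.mpr (hopt (π t) (hπ0 t) (hπ1 t) (v t) (hv t) s)
  set F : S → ℝ := fun s => ∑ t ∈ Finset.range K, (vstar s - v t s) with hFdef
  have hFnonneg : ∀ s, 0 ≤ F s := fun s =>
    Finset.sum_nonneg fun t _ => hΔ t s
  -- per-step identity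
  have key : ∀ t s, vstar s - v t s =
      ((∑ a, (πstar s a - π t s a) * qest t s a) +
        τ * ((-∑ a, πstar s a * Real.log (πstar s a)) -
          (-∑ a, π t s a * Real.log (π t s a))))
      - (∑ a, (πstar s a - π t s a) * ε t s a)
      + γ * ∑ a, πstar s a * ∑ s', Pr s a s' * (vstar s' - v t s') := by
    intro t s
    have hvs' : vstar s =
        (∑ a, πstar s a * (r s a + γ * ∑ s', Pr s a s' * v t s'))
        - τ * (∑ a, πstar s a * Real.log (πstar s a))
        + γ * (∑ a, πstar s a * ∑ s', Pr s a s' * (vstar s' - v t s')) := by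
      rw [hvstar s, Finset.mul_sum, Finset.mul_sum, ← Finset.sum_sub_distrib,
        ← Finset.sum_add_distrib]
      refine Finset.sum_congr rfl fun a _ => ?_
      have hsplit : ∑ s', Pr s a s' * (vstar s' - v t s')
          = (∑ s', Pr s a s' * vstar s') - ∑ s', Pr s a s' * v t s' := by
        simp [mul_sub, Finset.sum_sub_distrib]
      rw [hsplit]; ring
    have hv' : v t s =
        (∑ a, π t s a * (r s a + γ * ∑ s', Pr s a s' * v t s'))
        - τ * (∑ a, π t s a * Real.log (π t s a)) := by
      rw [hv t s, Finset.mul_sum, ← Finset.sum_sub_distrib]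
      exact Finset.sum_congr rfl fun a _ => by ring
    have hq : ∑ a, (πstar s a - π t s a) * qest t s a =
        (∑ a, (πstar s a - π t s a) * ε t s a)
        + ((∑ a, πstar s a * (r s a + γ * ∑ s', Pr s a s' * v t s'))
          - (∑ a, π t s a * (r s a + γ * ∑ s', Pr s a s' * v t s'))) := by
      rw [← Finset.sum_sub_distrib, ← Finset.sum_add_distrib]
      refine Finset.sum_congr rfl fun a _ => ?_
      linear_combination (π t s a - πstar s a) * hε t s a
    rw [hq, hvs', hv']; ring
  -- swapping sums in the contraction term
  have hBsum : ∀ s,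
      ∑ t ∈ Finset.range K, ∑ a, πstar s a * ∑ s', Pr s a s' * (vstar s' - v t s')
      = ∑ a, πstar s a * ∑ s', Pr s a s' * F s' := by
    intro s
    rw [Finset.sum_comm]
    refine Finset.sum_congr rfl fun a _ => ?_
    rw [← Finset.mul_sum]
    congr 1
    rw [Finset.sum_comm]
    refine Finset.sum_congr rfl fun s' _ => ?_
    rw [← Finset.mul_sum]
  -- error bound
  have hEbound : ∀ t s, |∑ a, (πstar s a - π t s a) * ε t s a|
      ≤ 2 * ‖(fun p : S × A => ε t p.1 p.2)‖ := by
    intro t s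
    calc |∑ a, (πstar s a - π t s a) * ε t s a|
        ≤ ∑ a, |(πstar s a - π t s a) * ε t s a| := Finset.abs_sum_le_sum_abs _ _
      _ ≤ ∑ a, (πstar s a + π t s a) * ‖(fun p : S × A => ε t p.1 p.2)‖ := by
          refine Finset.sum_le_sum fun a _ => ?_
          rw [abs_mul]
          refine mul_le_mul ?_ ?_ (abs_nonneg _) ?_
          · calc |πstar s a - π t s a| ≤ |πstar s a| + |π t s a| := abs_sub _ _
              _ = πstar s a + π t s a := by
                  rw [abs_of_pos (hstar0 s a), abs_of_pos (hπ0 t s a)]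
          · have := norm_le_pi_norm (fun p : S × A => ε t p.1 p.2) (s, a)
            simpa [Real.norm_eq_abs] using this
          · exact add_nonneg (hstar0 s a).le (hπ0 t s a).le
      _ = 2 * ‖(fun p : S × A => ε t p.1 p.2)‖ := by
          rw [← Finset.sum_mul, Finset.sum_add_distrib, hstar1 s, hπ1 t s]; ring
  -- take the maximizing state
  obtain ⟨s₀, -, hs₀⟩ := Finset.exists_max_image Finset.univ F Finset.univ_nonempty
  have hM : ∀ s', F s' ≤ F s₀ := fun s' => hs₀ s' (Finset.mem_univ s')
  -- contraction bound
  have hinner : ∑ a, πstar s₀ a * ∑ s', Pr s₀ a s' * F s' ≤ F s₀ := by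
    calc ∑ a, πstar s₀ a * ∑ s', Pr s₀ a s' * F s'
        ≤ ∑ a, πstar s₀ a * F s₀ := by
          refine Finset.sum_le_sum fun a _ => ?_
          refine mul_le_mul_of_nonneg_left ?_ (le_of_lt (hstar0 s₀ a))
          calc ∑ s', Pr s₀ a s' * F s'
              ≤ ∑ s', Pr s₀ a s' * F s₀ :=
                Finset.sum_le_sum fun s' _ =>
                  mul_le_mul_of_nonneg_left (hM s') (hPr0 s₀ a s')
            _ = F s₀ := by rw [← Finset.sum_mul, hPr1 s₀ a, one_mul]
      _ = F s₀ := by rw [← Finset.sum_mul, hstar1 s₀, one_mul]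
  -- identity for F s₀
  have hid : F s₀ = Reg s₀
      - (∑ t ∈ Finset.range K, ∑ a, (πstar s₀ a - π t s₀ a) * ε t s₀ a)
      + γ * ∑ a, πstar s₀ a * ∑ s', Pr s₀ a s' * F s' := by
    have : F s₀ = ∑ t ∈ Finset.range K,
        (((∑ a, (πstar s₀ a - π t s₀ a) * qest t s₀ a) +
          τ * ((-∑ a, πstar s₀ a * Real.log (πstar s₀ a)) -
            (-∑ a, π t s₀ a * Real.log (π t s₀ a))))
        - (∑ a, (πstar s₀ a - π t s₀ a) * ε t s₀ a)
        + γ * ∑ a, πstar s₀ a * ∑ s', Pr s₀ a s' * (vstar s' - v t s')) :=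
      Finset.sum_congr rfl fun t _ => key t s₀
    rw [this, Finset.sum_add_distrib, Finset.sum_sub_distrib, ← Finset.mul_sum,
      hBsum s₀, ← hReg s₀]
  -- main bound on F s₀
  set Etot : ℝ := ∑ t ∈ Finset.range K, ‖(fun p : S × A => ε t p.1 p.2)‖ with hEtot
  have hEtot0 : 0 ≤ Etot := Finset.sum_nonneg fun t _ => norm_nonneg _
  have hmain : (1 - γ) * F s₀ ≤ ‖Reg‖ + 2 * Etot := by
    have h1 : Reg s₀ ≤ ‖Reg‖ :=
      le_trans (le_abs_self _) (by simpa [Real.norm_eq_abs] using norm_le_pi_norm Reg s₀)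
    have h2 : -(∑ t ∈ Finset.range K, ∑ a, (πstar s₀ a - π t s₀ a) * ε t s₀ a)
        ≤ 2 * Etot := by
      rw [hEtot, Finset.mul_sum, ← Finset.sum_neg_distrib]
      exact Finset.sum_le_sum fun t _ =>
        le_trans (neg_le_abs _) (hEbound t s₀)
    have h3 : γ * (∑ a, πstar s₀ a * ∑ s', Pr s₀ a s' * F s') ≤ γ * F s₀ :=
      mul_le_mul_of_nonneg_left hinner (le_of_lt hγ0)
    nlinarith [hid]
  have hFbound : F s₀ ≤ (‖Reg‖ + 2 * Etot) / (1 - γ) := by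
    rw [le_div_iff₀ h1γ]; nlinarith
  -- conclude
  have hRHS : ‖Reg‖ / ((K : ℝ) * (1 - γ)) + 2 * Etot / ((K : ℝ) * (1 - γ))
      = (‖Reg‖ + 2 * Etot) / ((K : ℝ) * (1 - γ)) := by ring
  rw [hRHS]
  have hC : 0 ≤ (‖Reg‖ + 2 * Etot) / ((K : ℝ) * (1 - γ)) := by positivity
  rw [pi_norm_le_iff_of_nonneg hC]
  intro s
  have hFs : vstar s - vbar s = F s / (K : ℝ) := by
    rw [hvbar s, hFdef]
    simp only [Finset.sum_sub_distrib, Finset.sum_const, Finset.card_range,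
      nsmul_eq_mul]
    field_simp
  rw [Real.norm_eq_abs, hFs, abs_of_nonneg (div_nonneg (hFnonneg s) hKpos.le)]
  rw [div_le_div_iff₀ hKpos (by positivity)]
  calc F s * ((K:ℝ) * (1 - γ)) = ((1 - γ) * F s) * (K:ℝ) := by ring
    _ ≤ ((1 - γ) * F s₀) * (K:ℝ) := by
        have h := mul_le_mul_of_nonneg_right
          (mul_le_mul_of_nonneg_left (hM s) h1γ.le) hKpos.le
        linarith
    _ ≤ (‖Reg‖ + 2 * Etot) * (K:ℝ) :=
        mul_le_mul_of_nonneg_right hmain hKpos.le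
end

section
/- Let q be a bounded action-value function with values in [0, H_τ] on a finite MDP, let π be a strictly positive policy, and define v(s) = ∑ₐ π(a|s) q(s,a) + ζ H(π(·|s)) for ζ ≥ 0. For η ≤ min{1/(2H_τ), 1/(2ζ ln A)}, ∑ₐ π(a|s) ln(1 + η(q(s,a) − v(s))) ≤ −η ζ H(π(·|s)) for every state s. -/
/-- Upper bound on the policy-weighted log-advantage term in the SPMA analysis. -/
theorem spma_log_advantage_upper_bound
    (S A : Type*) [Fintype S] [Fintype A] [Nonempty A]
    (Hτ ζ η : ℝ) (hHτ : 0 ≤ Hτ) (hζ : 0 ≤ ζ) (hη0 : 0 < η)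
    (hη1 : 2 * Hτ * η ≤ 1) (hη2 : 2 * ζ * Real.log (Fintype.card A) * η ≤ 1)
    (q : S → A → ℝ) (hq : ∀ s a, q s a ∈ Set.Icc 0 Hτ)
    (π : S → A → ℝ) (hπ0 : ∀ s a, 0 < π s a) (hπ1 : ∀ s, ∑ a, π s a = 1)
    (v : S → ℝ)
    (hv : ∀ s, v s = (∑ a, π s a * q s a) +
      ζ * (-∑ a, π s a * Real.log (π s a)))
    (s : S) :
    ∑ a, π s a * Real.log (1 + η * (q s a - v s)) ≤
      -η * ζ * (-∑ a, π s a * Real.log (π s a)) := by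
  classical
  set H : ℝ := -∑ a, π s a * Real.log (π s a) with hH
  set Eq : ℝ := ∑ a, π s a * q s a with hEq
  have hn : (0:ℝ) < Fintype.card A := by
    exact_mod_cast Fintype.card_pos
  -- H ≥ 0
  have hπle1 : ∀ a, π s a ≤ 1 := by
    intro a
    rw [← hπ1 s]
    exact Finset.single_le_sum (fun b _ => (hπ0 s b).le) (Finset.mem_univ a)
  have hH0 : 0 ≤ H := by
    rw [hH, neg_nonneg]
    apply Finset.sum_nonpos
    intro a _
    exact mul_nonpos_of_nonneg_of_nonpos (hπ0 s a).le
      (Real.log_nonpos (hπ0 s a).le (hπle1 a))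
  -- H ≤ log card A
  have hHle : H ≤ Real.log (Fintype.card A) := by
    have key : ∀ a ∈ Finset.univ, -(π s a * Real.log (π s a)) ≤
        π s a * Real.log (Fintype.card A) + (1 / Fintype.card A - π s a) := by
      intro a _
      have hp := hπ0 s a
      have hlog : Real.log (1 / (Fintype.card A * π s a)) ≤
          1 / (Fintype.card A * π s a) - 1 :=
        Real.log_le_sub_one_of_pos (by positivity)
      have hrw : Real.log (1 / (Fintype.card A * π s a)) =
          -(Real.log (Fintype.card A) + Real.log (π s a)) := by
        rw [one_div, Real.log_inv, Real.log_mul (ne_of_gt hn) (ne_of_gt hp)]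
      rw [hrw] at hlog
      have := mul_le_mul_of_nonneg_left hlog hp.le
      have hfield : π s a * (1 / (Fintype.card A * π s a) - 1) =
          1 / Fintype.card A - π s a := by
        field_simp
      rw [hfield] at this
      nlinarith [this]
    calc H ≤ ∑ a, (π s a * Real.log (Fintype.card A) + (1 / Fintype.card A - π s a)) := by
            rw [hH, ← Finset.sum_neg_distrib]
            exact Finset.sum_le_sum key
      _ = Real.log (Fintype.card A) := by
            rw [Finset.sum_add_distrib, ← Finset.sum_mul, hπ1 s, Finset.sum_sub_distrib,
              hπ1 s, Finset.sum_const, Finset.card_univ]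
            rw [nsmul_eq_mul, mul_one_div_cancel (ne_of_gt hn)]; ring
  have hEq0 : 0 ≤ Eq :=
    Finset.sum_nonneg fun a _ => mul_nonneg (hπ0 s a).le (hq s a).1
  have hEqle : Eq ≤ Hτ := by
    calc Eq ≤ ∑ a, π s a * Hτ :=
          Finset.sum_le_sum fun a _ => mul_le_mul_of_nonneg_left (hq s a).2 (hπ0 s a).le
      _ = Hτ := by rw [← Finset.sum_mul, hπ1 s, one_mul]
  have hvs : v s = Eq + ζ * H := hv s
  have hζH : ζ * H ≤ ζ * Real.log (Fintype.card A) := mul_le_mul_of_nonneg_left hHle hζ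
  have hζH0 : 0 ≤ ζ * H := mul_nonneg hζ hH0
  -- positivity of 1 + η (q - v)
  have hpos : ∀ a, 0 < 1 + η * (q s a - v s) := by
    intro a
    by_contra hc
    push_neg at hc
    have hqa0 : 0 ≤ q s a := (hq s a).1
    -- η * v s ≥ 1 + η * q s a
    have h1 : 1 + η * q s a ≤ η * v s := by nlinarith
    have h2 : η * v s = η * Eq + η * (ζ * H) := by rw [hvs]; ring
    have h3 : η * Eq ≤ η * Hτ := mul_le_mul_of_nonneg_left hEqle hη0.le
    have h4 : η * (ζ * H) ≤ η * (ζ * Real.log (Fintype.card A)) :=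
      mul_le_mul_of_nonneg_left hζH hη0.le
    -- hence η v ≤ 1, so q s a = 0 and η Eq ≥ 1/2, Hτ > 0
    have hqa : q s a = 0 := by nlinarith
    have hEqbig : Hτ ≤ Eq := by nlinarith
    have hHτpos : 0 < Hτ := by nlinarith
    -- but Eq < Hτ since q s a = 0 and π s a > 0
    have hsplit : Eq = (∑ b ∈ Finset.univ.erase a, π s b * q s b) + π s a * q s a := by
      rw [hEq]; exact (Finset.sum_erase_add _ _ (Finset.mem_univ a)).symm
    have : Eq ≤ (1 - π s a) * Hτ := by
      rw [hsplit, hqa, mul_zero, add_zero]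
      calc ∑ b ∈ Finset.univ.erase a, π s b * q s b
          ≤ ∑ b ∈ Finset.univ.erase a, π s b * Hτ :=
            Finset.sum_le_sum fun b _ => mul_le_mul_of_nonneg_left (hq s b).2 (hπ0 s b).le
        _ = (1 - π s a) * Hτ := by
            rw [← Finset.sum_mul]
            congr 1
            have h := Finset.sum_erase_add Finset.univ (fun b => π s b) (Finset.mem_univ a)
            rw [hπ1 s] at h
            linarith
    nlinarith [hπ0 s a]
  -- ln(1+x) ≤ x
  calc ∑ a, π s a * Real.log (1 + η * (q s a - v s))
      ≤ ∑ a, π s a * (η * (q s a - v s)) := by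
        apply Finset.sum_le_sum
        intro a _
        apply mul_le_mul_of_nonneg_left _ (hπ0 s a).le
        have := Real.log_le_sub_one_of_pos (hpos a)
        linarith
    _ = η * Eq - η * v s := by
        have hr : ∀ a, π s a * (η * (q s a - v s)) =
            η * (π s a * q s a) - η * v s * π s a := fun a => by ring
        simp_rw [hr, Finset.sum_sub_distrib, ← Finset.mul_sum, hπ1 s, mul_one]
        rw [hEq]
    _ = -η * ζ * H := by rw [hvs]; ring
end
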